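/- arXiv:math/0303151 — 11 statements merged into one kernel-verified Lean document; each statement's English description precedes it below -/
import Mathlib

section
/- For all a,b ∈ K with a³ = b³ = −1 and every permutation (i j s) of {2,3,4} with i < j, the matrices satisfy φ_ij(a,b)·ψ_ij(a,b) = ψ_ij(a,b)·φ_ij(a,b) = f₄·I₂ in the ring S; in particular (φ_ij(a,b), ψ_ij(a,b)) is a matrix factorization of f₄. -/
open MvPolynomial Matrix TensorProduct

set_option maxHeartbeats 1000000
set_option synthInstance.maxHeartbeats 400000

noncomputable section

/-- The polynomial ring `S = K[Y₁,Y₂,Y₃,Y₄]`. -/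
abbrev S (K : Type) [Field K] := MvPolynomial (Fin 4) K

/-- The variables `Y₁,…,Y₄` (indexed by `1,…,4`). -/
def Yv (K : Type) [Field K] : ℕ → S K
  | 1 => X 0
  | 2 => X 1
  | 3 => X 2
  | 4 => X 3
  | _ => 0

/-- `f₄ = Y₁³+Y₂³+Y₃³+Y₄³`. -/
def f4 (K : Type) [Field K] : S K :=
  Yv K 1 ^ 3 + Yv K 2 ^ 3 + Yv K 3 ^ 3 + Yv K 4 ^ 3

/-- The hypersurface ring `R₄ = S/(f₄)`. -/
abbrev R4 (K : Type) [Field K] := S K ⧸ Ideal.span {f4 K}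

/-- The canonical projection `S → R₄`. -/
abbrev proj (K : Type) [Field K] : S K →+* R4 K := Ideal.Quotient.mk (Ideal.span {f4 K})

/-- The `R₄`-linear map `R₄ⁿ → R₄ⁿ` induced by an `n × n` matrix over `S`. -/
abbrev mbar (K : Type) [Field K] {n : ℕ} (M : Matrix (Fin n) (Fin n) (S K)) :
    (Fin n → R4 K) →ₗ[R4 K] (Fin n → R4 K) :=
  Matrix.mulVecLin (M.map ⇑(proj K))

/-- The cokernel of the `R₄`-linear map induced by a matrix over `S`. -/
abbrev coker (K : Type) [Field K] {n : ℕ} (M : Matrix (Fin n) (Fin n) (S K)) :=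
  (Fin n → R4 K) ⧸ LinearMap.range (mbar K M)

/-- The matrix `φ_ij(a,b)`. -/
def phiM (K : Type) [Field K] (a b : K) (i j s : ℕ) : Matrix (Fin 2) (Fin 2) (S K) :=
  !![Yv K 1 - C a * Yv K s, -(Yv K i ^ 2 + C b * Yv K i * Yv K j + C b ^ 2 * Yv K j ^ 2);
     Yv K i - C b * Yv K j, Yv K 1 ^ 2 + C a * Yv K 1 * Yv K s + C a ^ 2 * Yv K s ^ 2]

/-- The matrix `ψ_ij(a,b)`. -/
def psiM (K : Type) [Field K] (a b : K) (i j s : ℕ) : Matrix (Fin 2) (Fin 2) (S K) :=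
  !![Yv K 1 ^ 2 + C a * Yv K 1 * Yv K s + C a ^ 2 * Yv K s ^ 2,
       Yv K i ^ 2 + C b * Yv K i * Yv K j + C b ^ 2 * Yv K j ^ 2;
     -(Yv K i - C b * Yv K j), Yv K 1 - C a * Yv K s]

/-- The set `𝓛_i` of linear forms `Y_i - a Y_j` with `a³ = -1` and `i < j ≤ 4`. -/
def Lset (K : Type) [Field K] (i : ℕ) : Set (S K) :=
  {p | ∃ (a : K) (j : ℕ), a ^ 3 = -1 ∧ i < j ∧ j ≤ 4 ∧ p = Yv K i - C a * Yv K j}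

/-- The matrix `α(b,c,d,ε)`, where `a = ε²bcd`. -/
def alphaM (K : Type) [Field K] (b c d ε : K) : Matrix (Fin 3) (Fin 3) (S K) :=
  let a := ε ^ 2 * b * c * d
  !![0, Yv K 1 - C a * Yv K 4, Yv K 2 - C b * Yv K 3;
     Yv K 1 - C c * Yv K 2, -(C (b ^ 2) * Yv K 3) - C (a * b * c ^ 2 * ε ^ 2) * Yv K 4,
       C (b ^ 2 * c ^ 2) * Yv K 3 - C (a * b * c * ε ^ 2) * Yv K 4;
     Yv K 3 - C d * Yv K 4, C (c ^ 2) * Yv K 2 + C (b * c ^ 2) * Yv K 3 + C (a * c) * Yv K 4,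
       -(Yv K 1) - C c * Yv K 2 - C a * Yv K 4]

/-- The matrix `β(b,c,d,ε)`, the transpose of `α(b,c,d,ε)`. -/
def betaM (K : Type) [Field K] (b c d ε : K) : Matrix (Fin 3) (Fin 3) (S K) :=
  (alphaM K b c d ε).transpose

/-- The matrix `η(a,b,c,ε)`. -/
def etaM (K : Type) [Field K] (a b c ε : K) : Matrix (Fin 3) (Fin 3) (S K) :=
  !![0, Yv K 1 + Yv K 2, Yv K 3 - C a * Yv K 4;
     Yv K 1 + C ε * Yv K 2, -(Yv K 3) + C c * Yv K 4, 0;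
     Yv K 3 - C b * Yv K 4, 0, -(Yv K 1) - C (ε ^ 2) * Yv K 2]

/-- The matrix `θ(a,b,c)` (denoted `ϑ(a,b,c)` in the paper). -/
def thetaM (K : Type) [Field K] (a b c : K) : Matrix (Fin 3) (Fin 3) (S K) :=
  !![0, Yv K 1 + Yv K 3, Yv K 2 - C a * Yv K 4;
     Yv K 1 - C (a ^ 2 * b) * Yv K 3, -(Yv K 2) + C c * Yv K 4, 0;
     Yv K 2 - C b * Yv K 4, 0, -(Yv K 1) + C (a * b ^ 2) * Yv K 3]

/-- The matrix `D((a,b,c),(p,q,r))`. -/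
def DM (K : Type) [Field K] (a b c p q r : K) : Matrix (Fin 3) (Fin 3) (S K) :=
  !![0, Yv K 1 - C a * Yv K 2, Yv K 3 - C p * Yv K 4;
     Yv K 1 - C c * Yv K 2, -(Yv K 3) + C r * Yv K 4, 0;
     Yv K 3 - C q * Yv K 4, 0, -(Yv K 1) + C b * Yv K 2]

/-- `(a,b,c)` is a permutation (i.e. an enumeration) of the three cube roots of `-1` in `K`. -/
def cubePerm (K : Type) [Field K] (a b c : K) : Prop :=
  a ^ 3 = -1 ∧ b ^ 3 = -1 ∧ c ^ 3 = -1 ∧ a ≠ b ∧ a ≠ c ∧ b ≠ c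


lemma key_aux (K : Type) [Field K] (a b : K) (ha : a ^ 3 = -1) (hb : b ^ 3 = -1)
    (Y1 Yi Yj Ys : S K) :
    (!![Y1 - C a * Ys, -(Yi ^ 2 + C b * Yi * Yj + C b ^ 2 * Yj ^ 2);
        Yi - C b * Yj, Y1 ^ 2 + C a * Y1 * Ys + C a ^ 2 * Ys ^ 2] *
     !![Y1 ^ 2 + C a * Y1 * Ys + C a ^ 2 * Ys ^ 2, Yi ^ 2 + C b * Yi * Yj + C b ^ 2 * Yj ^ 2;
        -(Yi - C b * Yj), Y1 - C a * Ys]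
      = (Y1 ^ 3 + Yi ^ 3 + Yj ^ 3 + Ys ^ 3) • (1 : Matrix (Fin 2) (Fin 2) (S K))) ∧
    (!![Y1 ^ 2 + C a * Y1 * Ys + C a ^ 2 * Ys ^ 2, Yi ^ 2 + C b * Yi * Yj + C b ^ 2 * Yj ^ 2;
        -(Yi - C b * Yj), Y1 - C a * Ys] *
     !![Y1 - C a * Ys, -(Yi ^ 2 + C b * Yi * Yj + C b ^ 2 * Yj ^ 2);
        Yi - C b * Yj, Y1 ^ 2 + C a * Y1 * Ys + C a ^ 2 * Ys ^ 2]
      = (Y1 ^ 3 + Yi ^ 3 + Yj ^ 3 + Ys ^ 3) • (1 : Matrix (Fin 2) (Fin 2) (S K))) := by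
  have hca : (C a : S K) ^ 3 = -1 := by rw [← C_pow, ha, map_neg, C_1]
  have hcb : (C b : S K) ^ 3 = -1 := by rw [← C_pow, hb, map_neg, C_1]
  constructor <;>
  · refine Matrix.ext fun x y => ?_
    fin_cases x <;> fin_cases y <;>
      simp [Matrix.mul_apply, Fin.sum_univ_two, Matrix.one_apply] <;>
      first
        | linear_combination (-(Ys ^ 3)) * hca + (-(Yj ^ 3)) * hcb
        | ring

theorem stmt0 (K : Type) [Field K] [IsAlgClosed K] [CharZero K]
    (a b : K) (ha : a ^ 3 = -1) (hb : b ^ 3 = -1)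
    (i j s : ℕ) (hperm : ({i, j, s} : Finset ℕ) = {2, 3, 4}) (hij : i < j) :
    phiM K a b i j s * psiM K a b i j s = f4 K • (1 : Matrix (Fin 2) (Fin 2) (S K)) ∧
    psiM K a b i j s * phiM K a b i j s = f4 K • (1 : Matrix (Fin 2) (Fin 2) (S K)) := by
  have hi : i ∈ ({2, 3, 4} : Finset ℕ) := by rw [← hperm]; simp
  have hj : j ∈ ({2, 3, 4} : Finset ℕ) := by rw [← hperm]; simp
  have hs : s ∈ ({2, 3, 4} : Finset ℕ) := by rw [← hperm]; simp
  simp only [Finset.mem_insert, Finset.mem_singleton] at hi hj hs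
  have key := key_aux K a b ha hb (Yv K 1)
  rcases hi with rfl | rfl | rfl <;> rcases hj with rfl | rfl | rfl <;>
    rcases hs with rfl | rfl | rfl <;>
    first
      | omega
      | (exfalso; revert hperm; decide)
      | (guard_hyp hperm :ₛ ({2, 3, 4} : Finset ℕ) = {2, 3, 4}
         have hf : f4 K = Yv K 1 ^ 3 + Yv K 2 ^ 3 + Yv K 3 ^ 3 + Yv K 4 ^ 3 := by
           unfold f4; ring
         rw [hf]; exact ⟨(key _ _ _).1, (key _ _ _).2⟩)
      | (guard_hyp hperm :ₛ ({2, 4, 3} : Finset ℕ) = {2, 3, 4}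
         have hf : f4 K = Yv K 1 ^ 3 + Yv K 2 ^ 3 + Yv K 4 ^ 3 + Yv K 3 ^ 3 := by
           unfold f4; ring
         rw [hf]; exact ⟨(key _ _ _).1, (key _ _ _).2⟩)
      | (guard_hyp hperm :ₛ ({3, 4, 2} : Finset ℕ) = {2, 3, 4}
         have hf : f4 K = Yv K 1 ^ 3 + Yv K 3 ^ 3 + Yv K 4 ^ 3 + Yv K 2 ^ 3 := by
           unfold f4; ring
         rw [hf]; exact ⟨(key _ _ _).1, (key _ _ _).2⟩)
end
end

section
/- For all a,b ∈ K with a³ = b³ = −1 and i < j in {2,3,4}, the R₄-linear maps φ̄ and ψ̄ on R₄² induced by φ_ij(a,b) and ψ_ij(a,b) satisfy ker φ̄ = im ψ̄ and ker ψ̄ = im φ̄; consequently the first syzygy of Coker ψ_ij(a,b), that is, the kernel of the canonical surjection R₄² → Coker ψ_ij(a,b), is isomorphic as an R₄-module to Coker φ_ij(a,b). -/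
open MvPolynomial Matrix TensorProduct

set_option maxHeartbeats 1000000
set_option synthInstance.maxHeartbeats 400000

noncomputable section

lemma f4_ne_zero (K : Type) [Field K] [CharZero K] : f4 K ≠ 0 := by
  intro h
  have := congrArg (MvPolynomial.eval (fun _ => (1:K))) h
  simp [f4, Yv] at this
  norm_num at this

lemma exact_mf (K : Type) [Field K] [CharZero K] {n : ℕ}
    (M N : Matrix (Fin n) (Fin n) (S K))
    (h1 : M * N = f4 K • 1) (h2 : N * M = f4 K • 1) :
    LinearMap.ker (mbar K M) = LinearMap.range (mbar K N) := by
  have hf0 : proj K (f4 K) = 0 := by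
    rw [Ideal.Quotient.eq_zero_iff_mem]; exact Ideal.mem_span_singleton_self _
  have hcomp : (M.map ⇑(proj K)) * (N.map ⇑(proj K)) = 0 := by
    rw [← Matrix.map_mul, h1]
    ext k l
    by_cases h : k = l <;>
      simp [Matrix.map_apply, Matrix.smul_apply, Matrix.one_apply, h, hf0]
  apply le_antisymm
  · intro x hx
    have hx' : (M.map ⇑(proj K)) *ᵥ x = 0 := hx
    obtain ⟨xt, hxt⟩ : ∃ xt : Fin n → S K, ∀ k, proj K (xt k) = x k :=
      ⟨fun k => (Ideal.Quotient.mk_surjective (x k)).choose,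
       fun k => (Ideal.Quotient.mk_surjective (x k)).choose_spec⟩
    have hMx : ∀ k, proj K ((M *ᵥ xt) k) = 0 := by
      intro k
      have : proj K ((M *ᵥ xt) k) = ((M.map ⇑(proj K)) *ᵥ x) k := by
        simp only [Matrix.mulVec, dotProduct, map_sum, _root_.map_mul, Matrix.map_apply, hxt]
      rw [this, hx']
      rfl
    choose y hy using fun k =>
      Ideal.mem_span_singleton'.mp (Ideal.Quotient.eq_zero_iff_mem.mp (hMx k))
    have hMNy : M *ᵥ (N *ᵥ y) = M *ᵥ xt := by
      rw [Matrix.mulVec_mulVec, h1, Matrix.smul_mulVec, Matrix.one_mulVec]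
      funext k
      rw [← hy k]
      simp [mul_comm]
    have key : f4 K • (xt - N *ᵥ y) = 0 := by
      have h0 : M *ᵥ (xt - N *ᵥ y) = 0 := by
        rw [Matrix.mulVec_sub, hMNy, sub_self]
      have := congrArg (fun v => N *ᵥ v) h0
      simpa [Matrix.mulVec_mulVec, h2, Matrix.smul_mulVec, Matrix.one_mulVec] using this
    have hxtNy : xt = N *ᵥ y := by
      funext k
      have hk : f4 K * (xt - N *ᵥ y) k = 0 := congrFun key k
      rcases mul_eq_zero.mp hk with h | h
      · exact absurd h (f4_ne_zero K)
      · have := sub_eq_zero.mp (by simpa [Pi.sub_apply] using h)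
        exact this
    refine ⟨fun k => proj K (y k), ?_⟩
    funext k
    show ((N.map ⇑(proj K)) *ᵥ fun k => proj K (y k)) k = x k
    rw [← hxt k, hxtNy]
    simp only [Matrix.mulVec, dotProduct, map_sum, _root_.map_mul, Matrix.map_apply]
  · rintro x ⟨v, rfl⟩
    show (M.map ⇑(proj K)) *ᵥ ((N.map ⇑(proj K)) *ᵥ v) = 0
    rw [Matrix.mulVec_mulVec, hcomp, Matrix.zero_mulVec]

lemma phi_psi (K : Type) [Field K] (a b : K) (ha : a ^ 3 = -1) (hb : b ^ 3 = -1)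
    (i j s : ℕ) (h : i = 2 ∧ j = 3 ∧ s = 4 ∨ i = 2 ∧ j = 4 ∧ s = 3 ∨ i = 3 ∧ j = 4 ∧ s = 2) :
    phiM K a b i j s * psiM K a b i j s = f4 K • 1 ∧
    psiM K a b i j s * phiM K a b i j s = f4 K • 1 := by
  have hA : (C a : S K) ^ 3 = -1 := by rw [← C_pow, ha]; simp
  have hB : (C b : S K) ^ 3 = -1 := by rw [← C_pow, hb]; simp
  rcases h with ⟨rfl, rfl, rfl⟩ | ⟨rfl, rfl, rfl⟩ | ⟨rfl, rfl, rfl⟩ <;>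
  constructor <;>
  · refine Matrix.ext fun k l => ?_
    fin_cases k <;> fin_cases l <;>
    · simp only [phiM, psiM, f4, Matrix.mul_apply, Fin.sum_univ_two, Matrix.smul_apply,
        Matrix.one_apply, Matrix.cons_val', Matrix.cons_val_zero, Matrix.cons_val_one,
        Matrix.head_cons, Matrix.head_fin_const, Matrix.empty_val', Matrix.cons_val_fin_one,
        Matrix.of_apply, Fin.mk_zero, Fin.mk_one, smul_eq_mul, reduceIte, mul_one, mul_zero, Fin.isValue,
        zero_ne_one, one_ne_zero]
      first
      | linear_combination (- Yv K 4 ^ 3) * hA + (- Yv K 3 ^ 3) * hB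
      | linear_combination (- Yv K 3 ^ 3) * hA + (- Yv K 4 ^ 3) * hB
      | linear_combination (- Yv K 2 ^ 3) * hA + (- Yv K 4 ^ 3) * hB
      | ring


theorem stmt3 (K : Type) [Field K] [IsAlgClosed K] [CharZero K]
    (a b : K) (ha : a ^ 3 = -1) (hb : b ^ 3 = -1)
    (i j s : ℕ) (hperm : ({i, j, s} : Finset ℕ) = {2, 3, 4}) (hij : i < j) :
    LinearMap.ker (mbar K (phiM K a b i j s)) = LinearMap.range (mbar K (psiM K a b i j s)) ∧
    LinearMap.ker (mbar K (psiM K a b i j s)) = LinearMap.range (mbar K (phiM K a b i j s)) ∧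
    Nonempty
      ((LinearMap.ker (LinearMap.range (mbar K (psiM K a b i j s))).mkQ) ≃ₗ[R4 K]
        coker K (phiM K a b i j s)) := by
  have hcase : i = 2 ∧ j = 3 ∧ s = 4 ∨ i = 2 ∧ j = 4 ∧ s = 3 ∨ i = 3 ∧ j = 4 ∧ s = 2 := by
    have h2 : (2:ℕ) ∈ ({i,j,s}:Finset ℕ) := by rw [hperm]; simp
    have h3 : (3:ℕ) ∈ ({i,j,s}:Finset ℕ) := by rw [hperm]; simp
    have h4 : (4:ℕ) ∈ ({i,j,s}:Finset ℕ) := by rw [hperm]; simp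
    have hi : i ∈ ({2,3,4}:Finset ℕ) := by rw [← hperm]; simp
    have hj : j ∈ ({2,3,4}:Finset ℕ) := by rw [← hperm]; simp
    have hs : s ∈ ({2,3,4}:Finset ℕ) := by rw [← hperm]; simp
    simp only [Finset.mem_insert, Finset.mem_singleton] at h2 h3 h4 hi hj hs
    omega
  obtain ⟨h1, h2⟩ := phi_psi K a b ha hb i j s hcase
  have e1 := exact_mf K _ _ h1 h2
  have e2 := exact_mf K _ _ h2 h1
  refine ⟨e1, e2, ?_⟩
  exact ⟨(LinearEquiv.ofEq _ _ (Submodule.ker_mkQ _)).trans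
    ((LinearMap.quotKerEquivRange (mbar K (psiM K a b i j s))).symm.trans
      (Submodule.quotEquivOfEq _ _ e2))⟩
end
end

section
/- R₄ is an integral domain, and for all a,b ∈ K with a³ = b³ = −1 and i < j in {2,3,4}, the tensor products Coker φ_ij(a,b) ⊗_{R₄} Frac(R₄) and Coker ψ_ij(a,b) ⊗_{R₄} Frac(R₄) are one-dimensional vector spaces over the fraction field Frac(R₄); that is, the modules Coker φ_ij(a,b) and Coker ψ_ij(a,b) all have rank one. -/
/-!
`R₄` is a domain because `f₄` is prime, by Eisenstein's criterion applied variable by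
variable: `Y₁³ + Y₂³` is divisible exactly once by the prime `Y₁ + Y₂` (this needs `3 ≠ 0`),
and each further sum of cubes `c + Yₙ³` is Eisenstein at the prime `c`.

Since `a³ = b³ = -1`, both `φ_ij(a,b)` and `ψ_ij(a,b)` have determinant `f₄`, so over `R₄` they
are nonzero `2 × 2` matrices of determinant `0`. Taking cokernels commutes with base change, so after
tensoring with `Frac(R₄)` one gets the cokernel of a rank-one `2 × 2` matrix over a field.
-/

open MvPolynomial Matrix TensorProduct

set_option maxHeartbeats 1000000
set_option synthInstance.maxHeartbeats 400000

noncomputable section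

theorem Matrix.exists_isBaseChange_cokernel {R ι : Type*} [CommRing R] [Fintype ι]
    (T : Type*) [CommRing T] [Algebra R T] (A : Matrix ι ι R) :
    ∃ g : ((ι → R) ⧸ LinearMap.range A.mulVecLin) →ₗ[R]
        ((ι → T) ⧸ LinearMap.range (A.map (algebraMap R T)).mulVecLin),
      IsBaseChange T g := by
  set A' := A.map (algebraMap R T)
  let h : (ι → R) →ₗ[R] (ι → T) := (Algebra.linearMap R T).compLeft ι
  have comm : h ∘ₗ A.mulVecLin = (A'.mulVecLin.restrictScalars R) ∘ₗ h :=
    LinearMap.ext fun v => funext fun i => (algebraMap R T).map_mulVec A v i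
  have hle : LinearMap.range A.mulVecLin ≤
      LinearMap.ker ((LinearMap.range A'.mulVecLin).mkQ.restrictScalars R ∘ₗ h) := by
    rintro _ ⟨v, rfl⟩
    rw [LinearMap.mem_ker, ← LinearMap.comp_apply, LinearMap.comp_assoc, comm]
    exact (Submodule.Quotient.mk_eq_zero _).mpr ⟨h v, rfl⟩
  have hh : IsBaseChange T h := .finitePow ι (.linearMap R T)
  exact ⟨_, .of_right_exact T h h _ comm (Submodule.liftQ_mkQ _ _ hle) hh hh
    (LinearMap.exact_iff.mpr (Submodule.ker_mkQ _)) (Submodule.mkQ_surjective _)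
    (LinearMap.exact_iff.mpr (Submodule.ker_mkQ _)) (Submodule.mkQ_surjective _)⟩

theorem LinearMap.finrank_quotient_range_eq_one {F V : Type*} [Field F] [AddCommGroup V]
    [Module F V] (hV : Module.finrank F V = 2) (f : V →ₗ[F] V) (hf : f ≠ 0)
    (hinj : ¬ Function.Injective f) :
    Module.finrank F (V ⧸ LinearMap.range f) = 1 := by
  have : FiniteDimensional F V := Module.finite_of_finrank_eq_succ hV
  have hr : Module.finrank F (LinearMap.range f) ≠ 0 := by
    rwa [Ne, Submodule.finrank_eq_zero, LinearMap.range_eq_bot]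
  have hk : Module.finrank F (LinearMap.ker f) ≠ 0 := by
    rw [Ne, Submodule.finrank_eq_zero]
    exact fun h => hinj (LinearMap.ker_eq_bot.mp h)
  have := LinearMap.finrank_range_add_finrank_ker f
  have := Submodule.finrank_quotient_add_finrank (LinearMap.range f)
  omega

theorem Matrix.rank_fractionRing_tensor_cokernel_eq_one {R : Type*} [CommRing R] [IsDomain R]
    (A : Matrix (Fin 2) (Fin 2) R) (hdet : A.det = 0) (hA : A ≠ 0) :
    Module.rank (FractionRing R)
      (FractionRing R ⊗[R] ((Fin 2 → R) ⧸ LinearMap.range A.mulVecLin)) = 1 := by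
  set A' := A.map (algebraMap R (FractionRing R))
  obtain ⟨g, hg⟩ := A.exists_isBaseChange_cokernel (FractionRing R)
  have hA' : A'.mulVecLin ≠ 0 := by
    refine Matrix.toLin'.map_ne_zero_iff.mpr fun h => hA ?_
    exact Matrix.map_injective (IsFractionRing.injective R (FractionRing R)) (by simpa using h)
  have hinj : ¬ Function.Injective A'.mulVecLin := by
    have hdet' : A'.det = 0 := by
      simpa [hdet] using (RingHom.map_det (algebraMap R (FractionRing R)) A).symm
    obtain ⟨v, hv, hAv⟩ := Matrix.exists_mulVec_eq_zero_iff.mpr hdet'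
    exact fun h => hv (h (hAv.trans (map_zero _).symm))
  rw [hg.equiv.rank_eq, ← Module.finrank_eq_rank,
    LinearMap.finrank_quotient_range_eq_one (by simp) _ hA' hinj, Nat.cast_one]

open Polynomial in
theorem Polynomial.irreducible_X_pow_add_C_of_prime_dvd {A : Type*} [CommRing A] [IsDomain A]
    {p c : A} (hp : Prime p) (hpc : p ∣ c) (hpc2 : ¬ p ^ 2 ∣ c) {n : ℕ} (hn : 0 < n) :
    Irreducible (X ^ n + C c : A[X]) := by
  have hmonic : (X ^ n + C c : A[X]).Monic := monic_X_pow_add_C c hn.ne'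
  have hdeg : (X ^ n + C c : A[X]).degree = n := degree_X_pow_add_C hn c
  refine irreducible_of_eisenstein_criterion ((Ideal.span_singleton_prime hp.ne_zero).mpr hp)
    ?_ ?_ ?_ ?_ hmonic.isPrimitive
  · rw [hmonic.leadingCoeff, Ideal.mem_span_singleton]
    exact fun h => hp.not_isUnit (isUnit_of_dvd_one h)
  · intro m hm
    rw [hdeg, Nat.cast_lt] at hm
    rcases m with _ | m
    · simpa [Ideal.mem_span_singleton, coeff_X_pow, hn.ne] using hpc
    · simp [coeff_X_pow, hm.ne]
  · rw [hdeg]; exact_mod_cast hn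
  · rw [Ideal.span_singleton_pow, Ideal.mem_span_singleton]
    simpa [coeff_X_pow, hn.ne] using hpc2

theorem MvPolynomial.finSuccEquiv_sum_X_pow (K : Type*) [CommRing K] (n k : ℕ) :
    finSuccEquiv K n (∑ i : Fin (n + 1), X i ^ k) =
      Polynomial.X ^ k + Polynomial.C (∑ i : Fin n, X i ^ k) := by
  simp [Fin.sum_univ_succ, finSuccEquiv_X_zero, finSuccEquiv_X_succ]

theorem MvPolynomial.prime_sum_X_pow_succ_of_prime_dvd {K : Type*} [Field K] {n k : ℕ}
    (hk : 0 < k) {p : MvPolynomial (Fin n) K} (hp : Prime p) (hpc : p ∣ ∑ i, X i ^ k)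
    (hpc2 : ¬ p ^ 2 ∣ ∑ i, X i ^ k) :
    Prime (∑ i : Fin (n + 1), X i ^ k : MvPolynomial _ K) := by
  rw [← UniqueFactorizationMonoid.irreducible_iff_prime,
    ← MulEquiv.irreducible_iff (finSuccEquiv K n).toMulEquiv]
  change Irreducible (finSuccEquiv K n _)
  rw [finSuccEquiv_sum_X_pow]
  exact Polynomial.irreducible_X_pow_add_C_of_prime_dvd hp hpc hpc2 hk

theorem MvPolynomial.prime_X_zero_add_X_one (K : Type*) [CommRing K] [IsDomain K] :
    Prime (X 0 + X 1 : MvPolynomial (Fin 2) K) := by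
  rw [← MulEquiv.prime_iff (finSuccEquiv K 1).toMulEquiv]
  change Prime (finSuccEquiv K 1 (X 0 + X (Fin.succ 0)))
  rw [map_add, finSuccEquiv_X_zero, finSuccEquiv_X_succ, ← sub_neg_eq_add, ← map_neg]
  exact Polynomial.prime_X_sub_C _

theorem MvPolynomial.prime_sum_X_pow_three {K : Type*} [Field K] (h3 : (3 : K) ≠ 0) {n : ℕ}
    (hn : 3 ≤ n) : Prime (∑ i : Fin n, X i ^ 3 : MvPolynomial _ K) := by
  induction n, hn using Nat.le_induction with
  | base =>
    refine prime_sum_X_pow_succ_of_prime_dvd (by norm_num) (prime_X_zero_add_X_one K) ?_ ?_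
    · exact ⟨X 0 ^ 2 - X 0 * X 1 + X 1 ^ 2, by simp [Fin.sum_univ_two]; ring⟩
    · rintro ⟨t, ht⟩
      have hq : X 0 ^ 2 - X 0 * X 1 + X 1 ^ 2 = (X 0 + X 1) * t := by
        refine mul_left_cancel₀ (prime_X_zero_add_X_one K).ne_zero ?_
        simp only [Fin.sum_univ_two] at ht
        linear_combination ht
      have h := congrArg (eval ![1, -1]) hq
      norm_num at h
      exact h3 (by linear_combination h)
  | succ n hn ih =>
    refine prime_sum_X_pow_succ_of_prime_dvd (by norm_num) ih dvd_rfl fun h => ?_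
    have := (pow_dvd_pow_iff (n := 2) (m := 1) ih.ne_zero ih.not_isUnit).mp (by rwa [pow_one])
    omega

theorem f4_eq_sum_X_pow_three (K : Type) [Field K] : f4 K = ∑ i : Fin 4, X i ^ 3 := by
  simp [f4, Yv, Fin.sum_univ_four]

theorem isDomain_R4 (K : Type) [Field K] (h3 : (3 : K) ≠ 0) : IsDomain (R4 K) := by
  have hf4 : Prime (f4 K) := f4_eq_sum_X_pow_three K ▸ prime_sum_X_pow_three h3 (by norm_num)
  have := (Ideal.span_singleton_prime hf4.ne_zero).mpr hf4
  exact Ideal.Quotient.isDomain _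

theorem Matrix.rank_fractionRing_tensor_cokernel_map_mk_eq_one {A : Type*} [CommRing A]
    {f : A} [IsDomain (A ⧸ Ideal.span {f})] {M : Matrix (Fin 2) (Fin 2) A} (hdet : M.det = f)
    {k l : Fin 2} (hkl : ¬ f ∣ M k l) :
    Module.rank (FractionRing (A ⧸ Ideal.span {f}))
      (FractionRing (A ⧸ Ideal.span {f}) ⊗[A ⧸ Ideal.span {f}]
        ((Fin 2 → A ⧸ Ideal.span {f}) ⧸
          LinearMap.range (M.map (Ideal.Quotient.mk (Ideal.span {f}))).mulVecLin)) = 1 := by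
  refine rank_fractionRing_tensor_cokernel_eq_one _ ?_ fun h => hkl ?_
  · rw [← RingHom.mapMatrix_apply, ← RingHom.map_det, hdet, Ideal.Quotient.eq_zero_iff_mem]
    exact Ideal.mem_span_singleton_self f
  · rw [← Ideal.mem_span_singleton, ← Ideal.Quotient.eq_zero_iff_mem]
    exact congrFun (congrFun h k) l

theorem det_phiM (K : Type) [Field K] {a b : K} (ha : a ^ 3 = -1) (hb : b ^ 3 = -1) (i j s : ℕ) :
    (phiM K a b i j s).det = Yv K 1 ^ 3 + Yv K i ^ 3 + Yv K j ^ 3 + Yv K s ^ 3 := by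
  have hCa : (C a : S K) ^ 3 = -1 := by rw [← map_pow, ha, map_neg, map_one]
  have hCb : (C b : S K) ^ 3 = -1 := by rw [← map_pow, hb, map_neg, map_one]
  rw [phiM, det_fin_two_of]
  linear_combination (-Yv K s ^ 3) * hCa + (-Yv K j ^ 3) * hCb

theorem det_psiM (K : Type) [Field K] {a b : K} (ha : a ^ 3 = -1) (hb : b ^ 3 = -1) (i j s : ℕ) :
    (psiM K a b i j s).det = Yv K 1 ^ 3 + Yv K i ^ 3 + Yv K j ^ 3 + Yv K s ^ 3 := by
  have hCa : (C a : S K) ^ 3 = -1 := by rw [← map_pow, ha, map_neg, map_one]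
  have hCb : (C b : S K) ^ 3 = -1 := by rw [← map_pow, hb, map_neg, map_one]
  rw [psiM, det_fin_two_of]
  linear_combination (-Yv K s ^ 3) * hCa + (-Yv K j ^ 3) * hCb

theorem sum_cubes_eq_f4_of_perm (K : Type) [Field K] {i j s : ℕ}
    (h : ({i, j, s} : Finset ℕ) = {2, 3, 4}) :
    Yv K 1 ^ 3 + Yv K i ^ 3 + Yv K j ^ 3 + Yv K s ^ 3 = f4 K := by
  have mem : ∀ x, x ∈ ({i, j, s} : Finset ℕ) ↔ x ∈ ({2, 3, 4} : Finset ℕ) := by simp [h]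
  have hi := (mem i).mp (by simp)
  have hj := (mem j).mp (by simp)
  have hs := (mem s).mp (by simp)
  have h2 := (mem 2).mpr (by simp)
  have h3 := (mem 3).mpr (by simp)
  have h4 := (mem 4).mpr (by simp)
  simp only [Finset.mem_insert, Finset.mem_singleton] at hi hj hs h2 h3 h4
  rw [f4]
  rcases hi with rfl | rfl | rfl <;> rcases hj with rfl | rfl | rfl <;>
    rcases hs with rfl | rfl | rfl <;> first | omega | ring

theorem not_f4_dvd_Yv_one_sub_C_mul_Yv (K : Type) [Field K] (a : K) {s : ℕ}
    (hs : s ∈ ({2, 3, 4} : Finset ℕ)) :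
    ¬ f4 K ∣ Yv K 1 - C a * Yv K s := by
  have key : ∀ v : Fin 4 → K, eval v (f4 K) = 0 → eval v (Yv K 1 - C a * Yv K s) ≠ 0 →
      ¬ f4 K ∣ Yv K 1 - C a * Yv K s := fun v hv hne hdvd =>
    hne (zero_dvd_iff.mp (hv ▸ map_dvd (eval v) hdvd))
  simp only [Finset.mem_insert, Finset.mem_singleton] at hs
  rcases hs with rfl | rfl | rfl
  · exact key ![1, 0, -1, 0] (by simp [f4, Yv]; norm_num) (by simp [Yv])
  · exact key ![1, -1, 0, 0] (by simp [f4, Yv]; norm_num) (by simp [Yv])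
  · exact key ![1, -1, 0, 0] (by simp [f4, Yv]; norm_num) (by simp [Yv])

theorem stmt5_general (K : Type) [Field K] [CharZero K] :
    IsDomain (R4 K) ∧
    ∀ (a b : K), a ^ 3 = -1 → b ^ 3 = -1 →
      ∀ (i j s : ℕ), ({i, j, s} : Finset ℕ) = {2, 3, 4} → i < j →
        Module.rank (FractionRing (R4 K))
            (FractionRing (R4 K) ⊗[R4 K] coker K (phiM K a b i j s)) = 1 ∧
        Module.rank (FractionRing (R4 K))
            (FractionRing (R4 K) ⊗[R4 K] coker K (psiM K a b i j s)) = 1 := by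
  have := isDomain_R4 K three_ne_zero
  refine ⟨this, fun a b ha hb i j s hijs _ => ?_⟩
  have hs : s ∈ ({2, 3, 4} : Finset ℕ) := by simp [← hijs]
  have hf4 := sum_cubes_eq_f4_of_perm K hijs
  exact ⟨rank_fractionRing_tensor_cokernel_map_mk_eq_one ((det_phiM K ha hb i j s).trans hf4)
      (k := 0) (l := 0) (not_f4_dvd_Yv_one_sub_C_mul_Yv K a hs),
    rank_fractionRing_tensor_cokernel_map_mk_eq_one ((det_psiM K ha hb i j s).trans hf4)
      (k := 1) (l := 1) (not_f4_dvd_Yv_one_sub_C_mul_Yv K a hs)⟩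

theorem stmt5 (K : Type) [Field K] [IsAlgClosed K] [CharZero K] :
    IsDomain (R4 K) ∧
    ∀ (a b : K), a ^ 3 = -1 → b ^ 3 = -1 →
      ∀ (i j s : ℕ), ({i, j, s} : Finset ℕ) = {2, 3, 4} → i < j →
        Module.rank (FractionRing (R4 K))
            (FractionRing (R4 K) ⊗[R4 K] coker K (phiM K a b i j s)) = 1 ∧
        Module.rank (FractionRing (R4 K))
            (FractionRing (R4 K) ⊗[R4 K] coker K (psiM K a b i j s)) = 1 :=
  stmt5_general K
end
end

section
/- Let K be a field of characteristic 0 and let a₁,a₂,b₁,b₂ ∈ K satisfy a₁³+b₁³+1 = 0, a₂³+b₂³+1 = 0, a₁²a₂+b₁²b₂ = 0 and a₁a₂²+b₁b₂² = 0. Then a₁a₂ = 0 and b₁b₂ = 0. -/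
open MvPolynomial Matrix TensorProduct

set_option maxHeartbeats 1000000
set_option synthInstance.maxHeartbeats 400000

noncomputable section

theorem stmt6 (K : Type) [Field K] [CharZero K]
    (a1 a2 b1 b2 : K)
    (h1 : a1 ^ 3 + b1 ^ 3 + 1 = 0) (h2 : a2 ^ 3 + b2 ^ 3 + 1 = 0)
    (h3 : a1 ^ 2 * a2 + b1 ^ 2 * b2 = 0) (h4 : a1 * a2 ^ 2 + b1 * b2 ^ 2 = 0) :
    a1 * a2 = 0 ∧ b1 * b2 = 0 := by
  have e1 : a1 ^ 2 * a2 = -(b1 ^ 2 * b2) := by linear_combination h3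
  have e2 : a1 * a2 ^ 2 = -(b1 * b2 ^ 2) := by linear_combination h4
  have e3 : (a1 * a2) ^ 3 = (b1 * b2) ^ 3 := by
    calc (a1 * a2) ^ 3 = (a1 ^ 2 * a2) * (a1 * a2 ^ 2) := by ring
    _ = (-(b1 ^ 2 * b2)) * (-(b1 * b2 ^ 2)) := by rw [e1, e2]
    _ = (b1 * b2) ^ 3 := by ring
  have e4 : (a1 ^ 2 * a2) ^ 3 = -(b1 ^ 2 * b2) ^ 3 := by rw [e1]; ring
  have e5 : (a1 * a2) ^ 3 * (a1 ^ 3 + b1 ^ 3) = 0 := by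
    have : (a1 ^ 2 * a2) ^ 3 = a1 ^ 3 * (a1 * a2) ^ 3 := by ring
    have h6 : -(b1 ^ 2 * b2) ^ 3 = -(b1 ^ 3 * (b1 * b2) ^ 3) := by ring
    rw [← e3] at h6
    linear_combination -this + e4 + h6
  have hab : a1 ^ 3 + b1 ^ 3 = -1 := by linear_combination h1
  rw [hab] at e5
  have ha : a1 * a2 = 0 := by
    have : (a1 * a2) ^ 3 = 0 := by linear_combination -e5
    exact pow_eq_zero_iff (by norm_num) |>.mp this
  have hb : b1 * b2 = 0 := by
    have : (b1 * b2) ^ 3 = 0 := by rw [← e3, ha]; ring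
    exact pow_eq_zero_iff (by norm_num) |>.mp this
  exact ⟨ha, hb⟩
end
end

section
/- For all a,b ∈ K with a³ = b³ = −1 and i < j in {2,3,4}, the ideal of S generated by the four entries of φ_ij(a,b) (its first Fitting ideal) equals the ideal (Y₁−aY_s, Y_i−bY_j, Y_s², Y_j²) of S, where s is the element of {2,3,4} different from i and j. -/
open MvPolynomial Matrix TensorProduct

set_option maxHeartbeats 1000000
set_option synthInstance.maxHeartbeats 400000

noncomputable section

theorem stmt7 (K : Type) [Field K] [IsAlgClosed K] [CharZero K]
    (a b : K) (ha : a ^ 3 = -1) (hb : b ^ 3 = -1)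
    (i j s : ℕ) (hperm : ({i, j, s} : Finset ℕ) = {2, 3, 4}) (hij : i < j) :
    Ideal.span
        ({phiM K a b i j s 0 0, phiM K a b i j s 0 1,
          phiM K a b i j s 1 0, phiM K a b i j s 1 1} : Set (S K)) =
      Ideal.span
        ({Yv K 1 - C a * Yv K s, Yv K i - C b * Yv K j, Yv K s ^ 2, Yv K j ^ 2} : Set (S K)) := by

  have ha0 : a ≠ 0 := by rintro rfl; norm_num at ha
  have hb0 : b ≠ 0 := by rintro rfl; norm_num at hb
  have h3a : (3 * a ^ 2) ≠ 0 := mul_ne_zero three_ne_zero (pow_ne_zero _ ha0)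
  have h3b : (3 * b ^ 2) ≠ 0 := mul_ne_zero three_ne_zero (pow_ne_zero _ hb0)
  have e00 : phiM K a b i j s 0 0 = Yv K 1 - C a * Yv K s := rfl
  have e01 : phiM K a b i j s 0 1
      = -(Yv K i ^ 2 + C b * Yv K i * Yv K j + C b ^ 2 * Yv K j ^ 2) := rfl
  have e10 : phiM K a b i j s 1 0 = Yv K i - C b * Yv K j := rfl
  have e11 : phiM K a b i j s 1 1
      = Yv K 1 ^ 2 + C a * Yv K 1 * Yv K s + C a ^ 2 * Yv K s ^ 2 := rfl
  have hCa : (C (3 * a ^ 2) : S K) = 3 * C a ^ 2 := by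
    rw [C_mul, C_pow, map_ofNat]
  have hCb : (C (3 * b ^ 2) : S K) = 3 * C b ^ 2 := by
    rw [C_mul, C_pow, map_ofNat]
  have hinva : (C ((3 * a ^ 2)⁻¹) : S K) * (3 * C a ^ 2) = 1 := by
    rw [← hCa, ← C_mul, inv_mul_cancel₀ h3a, C_1]
  have hinvb : (C ((3 * b ^ 2)⁻¹) : S K) * (3 * C b ^ 2) = 1 := by
    rw [← hCb, ← C_mul, inv_mul_cancel₀ h3b, C_1]
  apply le_antisymm
  · rw [Ideal.span_le]
    intro x hx
    simp only [Set.mem_insert_iff, Set.mem_singleton_iff] at hx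
    have m1 : Yv K 1 - C a * Yv K s ∈ Ideal.span
        ({Yv K 1 - C a * Yv K s, Yv K i - C b * Yv K j, Yv K s ^ 2, Yv K j ^ 2} : Set (S K)) :=
      Ideal.subset_span (Set.mem_insert _ _)
    have m2 : Yv K i - C b * Yv K j ∈ Ideal.span
        ({Yv K 1 - C a * Yv K s, Yv K i - C b * Yv K j, Yv K s ^ 2, Yv K j ^ 2} : Set (S K)) :=
      Ideal.subset_span (Set.mem_insert_of_mem _ (Set.mem_insert _ _))
    have m3 : Yv K s ^ 2 ∈ Ideal.span
        ({Yv K 1 - C a * Yv K s, Yv K i - C b * Yv K j, Yv K s ^ 2, Yv K j ^ 2} : Set (S K)) :=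
      Ideal.subset_span (Set.mem_insert_of_mem _ (Set.mem_insert_of_mem _ (Set.mem_insert _ _)))
    have m4 : Yv K j ^ 2 ∈ Ideal.span
        ({Yv K 1 - C a * Yv K s, Yv K i - C b * Yv K j, Yv K s ^ 2, Yv K j ^ 2} : Set (S K)) :=
      Ideal.subset_span (Set.mem_insert_of_mem _ (Set.mem_insert_of_mem _
        (Set.mem_insert_of_mem _ rfl)))
    rcases hx with rfl | rfl | rfl | rfl
    · rw [e00]; exact m1
    · rw [e01]
      have : -(Yv K i ^ 2 + C b * Yv K i * Yv K j + C b ^ 2 * Yv K j ^ 2)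
          = (-(Yv K i + 2 * C b * Yv K j)) * (Yv K i - C b * Yv K j)
            + (-(3 * C b ^ 2)) * Yv K j ^ 2 := by ring
      rw [this]
      exact add_mem (Ideal.mul_mem_left _ _ m2) (Ideal.mul_mem_left _ _ m4)
    · rw [e10]; exact m2
    · rw [e11]
      have : Yv K 1 ^ 2 + C a * Yv K 1 * Yv K s + C a ^ 2 * Yv K s ^ 2
          = (Yv K 1 + 2 * C a * Yv K s) * (Yv K 1 - C a * Yv K s)
            + (3 * C a ^ 2) * Yv K s ^ 2 := by ring
      rw [this]
      exact add_mem (Ideal.mul_mem_left _ _ m1) (Ideal.mul_mem_left _ _ m3)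
  · rw [Ideal.span_le]
    intro x hx
    simp only [Set.mem_insert_iff, Set.mem_singleton_iff] at hx
    have m1 : phiM K a b i j s 0 0 ∈ Ideal.span
        ({phiM K a b i j s 0 0, phiM K a b i j s 0 1,
          phiM K a b i j s 1 0, phiM K a b i j s 1 1} : Set (S K)) :=
      Ideal.subset_span (Set.mem_insert _ _)
    have m2 : phiM K a b i j s 0 1 ∈ Ideal.span
        ({phiM K a b i j s 0 0, phiM K a b i j s 0 1,
          phiM K a b i j s 1 0, phiM K a b i j s 1 1} : Set (S K)) :=
      Ideal.subset_span (Set.mem_insert_of_mem _ (Set.mem_insert _ _))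
    have m3 : phiM K a b i j s 1 0 ∈ Ideal.span
        ({phiM K a b i j s 0 0, phiM K a b i j s 0 1,
          phiM K a b i j s 1 0, phiM K a b i j s 1 1} : Set (S K)) :=
      Ideal.subset_span (Set.mem_insert_of_mem _ (Set.mem_insert_of_mem _ (Set.mem_insert _ _)))
    have m4 : phiM K a b i j s 1 1 ∈ Ideal.span
        ({phiM K a b i j s 0 0, phiM K a b i j s 0 1,
          phiM K a b i j s 1 0, phiM K a b i j s 1 1} : Set (S K)) :=
      Ideal.subset_span (Set.mem_insert_of_mem _ (Set.mem_insert_of_mem _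
        (Set.mem_insert_of_mem _ rfl)))
    rcases hx with rfl | rfl | rfl | rfl
    · rw [← e00]; exact m1
    · rw [← e10]; exact m3
    · have hY : Yv K s ^ 2
          = C ((3 * a ^ 2)⁻¹) * phiM K a b i j s 1 1
            + (-(C ((3 * a ^ 2)⁻¹) * (Yv K 1 + 2 * C a * Yv K s))) * phiM K a b i j s 0 0 := by
        rw [e11, e00]
        linear_combination (-(Yv K s ^ 2)) * hinva
      rw [hY]
      exact add_mem (Ideal.mul_mem_left _ _ m4) (Ideal.mul_mem_left _ _ m1)
    · have hY : Yv K j ^ 2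
          = (-(C ((3 * b ^ 2)⁻¹))) * phiM K a b i j s 0 1
            + (-(C ((3 * b ^ 2)⁻¹) * (Yv K i + 2 * C b * Yv K j))) * phiM K a b i j s 1 0 := by
        rw [e01, e10]
        linear_combination (-(Yv K j ^ 2)) * hinvb
      rw [hY]
      exact add_mem (Ideal.mul_mem_left _ _ m2) (Ideal.mul_mem_left _ _ m3)
end
end

section
/- Let α, β, γ, δ be linearly independent homogeneous linear forms in S such that f₄ belongs to the ideal intersection (α,β) ∩ (γ,δ). Then there exist homogeneous linear forms m, n, w, t in S such that the determinant of the 3×3 matrix [[0, α, β],[γ, m, n],[δ, w, t]] equals f₄. -/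
/-!
Linearly independent linear forms `α, β, γ, δ` are the images of the variables under a linear
change of coordinates, which turns `(α, β) ∩ (γ, δ)` into the monomial ideal
`(X₀, X₁) ∩ (X₂, X₃) = (X₀, X₁) (X₂, X₃)`. Hence `f₄ = αγ r₀ + αδ r₁ + βγ r₂ + βδ r₃`, and
passing to degree-3 components the `rᵢ` can be taken linear. Expanding along the first row, this
sum is the determinant with `m = -r₃`, `n = r₁`, `w = r₂`, `t = -r₀`.
-/

open MvPolynomial Matrix TensorProduct

set_option maxHeartbeats 1000000
set_option synthInstance.maxHeartbeats 400000

noncomputable section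

namespace MvPolynomial

section Homogeneous

variable {σ ι R : Type*} [CommSemiring R]

attribute [local instance] gradedAlgebra in
theorem IsHomogeneous.homogeneousComponent_add_mul {p : MvPolynomial σ R} {m : ℕ}
    (hp : p.IsHomogeneous m) (q : MvPolynomial σ R) (n : ℕ) :
    homogeneousComponent (m + n) (p * q) = p * homogeneousComponent n q := by
  rw [← decomposition.decompose'_apply, ← decomposition.decompose'_apply]
  exact DirectSum.coe_decompose_mul_add_of_left_mem (homogeneousSubmodule σ R) hp

theorem IsHomogeneous.exists_eq_sum_mul_of_mem_span [Fintype ι] {g : ι → MvPolynomial σ R}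
    {m n : ℕ} (hg : ∀ i, (g i).IsHomogeneous m) {f : MvPolynomial σ R}
    (hf : f.IsHomogeneous (m + n)) (hmem : f ∈ Ideal.span (Set.range g)) :
    ∃ r : ι → MvPolynomial σ R, (∀ i, (r i).IsHomogeneous n) ∧ f = ∑ i, g i * r i := by
  obtain ⟨c, rfl⟩ := Ideal.mem_span_range_iff_exists_fun.mp hmem
  refine ⟨fun i => homogeneousComponent n (c i), fun i => homogeneousComponent_isHomogeneous n _,
    ?_⟩
  rw [← homogeneousComponent_eq_self hf, map_sum]
  simp only [mul_comm (c _), (hg _).homogeneousComponent_add_mul]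

end Homogeneous

section MonomialIdeal

variable {σ R : Type*} [CommSemiring R]

theorem span_X_image_inf_le_mul {s t : Set σ} (hst : Disjoint s t) :
    Ideal.span (X '' s) ⊓ Ideal.span (X '' t) ≤
      (Ideal.span (X '' s) * Ideal.span (X '' t) : Ideal (MvPolynomial σ R)) := by
  classical
  rintro p ⟨hps, hpt⟩
  rw [SetLike.mem_coe, mem_ideal_span_X_image] at hps hpt
  have hmonomial : p ∈ Ideal.span ((fun m => monomial m (1 : R)) ''
      Set.image2 (fun i j => Finsupp.single i 1 + Finsupp.single j 1) s t) := by
    refine mem_ideal_span_monomial_image.mpr fun m hm => ?_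
    obtain ⟨i, hi, hmi⟩ := hps m hm
    obtain ⟨j, hj, hmj⟩ := hpt m hm
    have hij : i ≠ j := hst.ne_of_mem hi hj
    refine ⟨_, Set.mem_image2_of_mem hi hj, fun k => ?_⟩
    simp only [Finsupp.add_apply, Finsupp.single_apply]
    split_ifs <;> subst_vars <;> first | omega | contradiction
  refine Ideal.span_le.mpr ?_ hmonomial
  rintro _ ⟨_, ⟨i, hi, j, hj, rfl⟩, rfl⟩
  have hX : monomial (Finsupp.single i 1 + Finsupp.single j 1) (1 : R) = X i * X j := by
    rw [X, X, monomial_mul, one_mul]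
  simp only [SetLike.mem_coe, hX]
  exact Ideal.mul_mem_mul (Ideal.subset_span ⟨i, hi, rfl⟩) (Ideal.subset_span ⟨j, hj, rfl⟩)

end MonomialIdeal

section LinearSubst

variable {σ R : Type*} [Fintype σ] [CommSemiring R]

def linearSubst (A : Matrix σ σ R) : MvPolynomial σ R →ₐ[R] MvPolynomial σ R :=
  aeval fun i => ∑ j, A i j • X j

theorem linearSubst_X (A : Matrix σ σ R) (i : σ) : linearSubst A (X i) = ∑ j, A i j • X j :=
  aeval_X _ i

theorem linearSubst_comp (A B : Matrix σ σ R) :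
    (linearSubst B).comp (linearSubst A) = linearSubst (A * B) := by
  refine algHom_ext fun i => ?_
  simp only [AlgHom.comp_apply, linearSubst_X, map_sum, map_smul, Matrix.mul_apply, Finset.smul_sum,
    Finset.sum_smul, smul_smul]
  exact Finset.sum_comm

theorem linearSubst_one [DecidableEq σ] : linearSubst (1 : Matrix σ σ R) = AlgHom.id R _ :=
  algHom_ext fun i => by simp [linearSubst_X, Matrix.one_apply, ite_smul]

def linearSubstEquiv [DecidableEq σ] (A : (Matrix σ σ R)ˣ) :
    MvPolynomial σ R ≃ₐ[R] MvPolynomial σ R :=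
  AlgEquiv.ofAlgHom (linearSubst A) (linearSubst ↑A⁻¹)
    (by rw [linearSubst_comp, A.inv_mul, linearSubst_one])
    (by rw [linearSubst_comp, A.mul_inv, linearSubst_one])

theorem linearSubstEquiv_X [DecidableEq σ] (A : (Matrix σ σ R)ˣ) (i : σ) :
    linearSubstEquiv A (X i) = ∑ j, (A : Matrix σ σ R) i j • X j :=
  linearSubst_X _ i

end LinearSubst

variable {σ K : Type*} [Fintype σ] [Field K]

theorem exists_algEquiv_X_eq_of_linearIndependent {v : σ → MvPolynomial σ K}
    (hv : ∀ i, (v i).IsHomogeneous 1) (hli : LinearIndependent K v) :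
    ∃ e : MvPolynomial σ K ≃ₐ[K] MvPolynomial σ K, ∀ i, e (X i) = v i := by
  classical
  have hspan : ∀ i, v i ∈ Submodule.span K (Set.range (X : σ → MvPolynomial σ K)) := fun i => by
    rw [← homogeneousSubmodule_one_eq_span_X]; exact hv i
  choose A hA using fun i => Submodule.mem_span_range_iff_exists_fun K |>.mp (hspan i)
  have hAv : Fintype.linearCombination K X ∘ (Matrix.of A).row = v := by
    ext1 i; simp [Fintype.linearCombination_apply, hA]
  have hunit : IsUnit (Matrix.of A) :=
    Matrix.linearIndependent_rows_iff_isUnit.mp (LinearIndependent.of_comp _ (hAv ▸ hli))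
  exact ⟨linearSubstEquiv hunit.unit, fun i => by simp [linearSubstEquiv_X, hA]⟩

theorem span_image_inf_le_mul_of_linearIndependent {v : σ → MvPolynomial σ K}
    (hv : ∀ i, (v i).IsHomogeneous 1) (hli : LinearIndependent K v) {s t : Set σ}
    (hst : Disjoint s t) :
    Ideal.span (v '' s) ⊓ Ideal.span (v '' t) ≤ Ideal.span (v '' s) * Ideal.span (v '' t) := by
  obtain ⟨e, he⟩ := exists_algEquiv_X_eq_of_linearIndependent hv hli
  let φ : MvPolynomial σ K ≃+* MvPolynomial σ K := e
  have hmap : ∀ u : Set σ, Ideal.span (v '' u) =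
      (Ideal.span (X '' u : Set (MvPolynomial σ K))).map (φ : MvPolynomial σ K →+* _) := fun u => by
    rw [Ideal.map_span, Set.image_image]
    exact congrArg _ (Set.image_congr fun i _ => (he i).symm)
  rw [hmap, hmap, ← Ideal.map_mul, Ideal.map_comap_of_equiv, Ideal.map_comap_of_equiv,
    Ideal.map_comap_of_equiv, ← Ideal.comap_inf]
  exact Ideal.comap_mono (span_X_image_inf_le_mul hst)

end MvPolynomial

theorem isHomogeneous_f4 (K : Type) [Field K] : (f4 K).IsHomogeneous 3 :=
  (((isHomogeneous_X_pow 0 3).add (isHomogeneous_X_pow 1 3)).add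
    (isHomogeneous_X_pow 2 3)).add (isHomogeneous_X_pow 3 3)

theorem stmt8_general (K : Type) [Field K]
    (α β γ δ : S K)
    (hα : α.IsHomogeneous 1) (hβ : β.IsHomogeneous 1)
    (hγ : γ.IsHomogeneous 1) (hδ : δ.IsHomogeneous 1)
    (hind : LinearIndependent K ![α, β, γ, δ])
    (hf : f4 K ∈ Ideal.span {α, β} ⊓ Ideal.span {γ, δ}) :
    ∃ m n w t : S K, m.IsHomogeneous 1 ∧ n.IsHomogeneous 1 ∧
      w.IsHomogeneous 1 ∧ t.IsHomogeneous 1 ∧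
      (!![0, α, β; γ, m, n; δ, w, t]).det = f4 K := by
  have hmem : f4 K ∈ Ideal.span {α, β} * Ideal.span {γ, δ} := by
    have hlinear : ∀ i, (![α, β, γ, δ] i).IsHomogeneous 1 := fun i => by
      fin_cases i <;> assumption
    simpa [Set.image_insert_eq] using span_image_inf_le_mul_of_linearIndependent hlinear hind
      (s := {0, 1}) (t := {2, 3}) (by simp) (by simpa [Set.image_insert_eq] using hf)
  rw [Ideal.span_pair_mul_span_pair] at hmem
  have hquad : ∀ i, (![α * γ, α * δ, β * γ, β * δ] i).IsHomogeneous 2 := fun i => by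
    fin_cases i
    exacts [hα.mul hγ, hα.mul hδ, hβ.mul hγ, hβ.mul hδ]
  obtain ⟨r, hr, hfr⟩ := (isHomogeneous_f4 K).exists_eq_sum_mul_of_mem_span (n := 1) hquad
    (by simpa only [range_cons, range_empty, Set.union_empty, Set.singleton_union] using hmem)
  refine ⟨-r 3, r 1, r 2, -r 0, (hr 3).neg, hr 1, hr 2, (hr 0).neg, ?_⟩
  rw [det_fin_three, hfr, Fin.sum_univ_four]
  simp only [of_apply, cons_val', cons_val_zero, cons_val_one, cons_val, cons_val_fin_one]
  ring

theorem stmt8 (K : Type) [Field K] [IsAlgClosed K] [CharZero K]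
    (α β γ δ : S K)
    (hα : α.IsHomogeneous 1) (hβ : β.IsHomogeneous 1)
    (hγ : γ.IsHomogeneous 1) (hδ : δ.IsHomogeneous 1)
    (hind : LinearIndependent K ![α, β, γ, δ])
    (hf : f4 K ∈ Ideal.span {α, β} ⊓ Ideal.span {γ, δ}) :
    ∃ m n w t : S K, m.IsHomogeneous 1 ∧ n.IsHomogeneous 1 ∧
      w.IsHomogeneous 1 ∧ t.IsHomogeneous 1 ∧
      (!![0, α, β; γ, m, n; δ, w, t]).det = f4 K :=
  stmt8_general K α β γ δ hα hβ hγ hδ hind hf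
end
end

section
/- Let a,b,c,d ∈ K with a³ = b³ = c³ = d³ = −1, and suppose there exist linear forms m, n, w, t in S such that the determinant of the matrix [[0, Y₁−aY₄, Y₂−bY₃],[Y₁−cY₂, m, n],[Y₃−dY₄, w, t]] equals f₄. Then (bcd)² + a·bcd + a² = 0; equivalently, bcd = εa for some ε ∈ K with ε³ = 1 and ε ≠ 1. -/
open MvPolynomial Matrix TensorProduct

set_option maxHeartbeats 1000000
set_option synthInstance.maxHeartbeats 400000

noncomputable section

/-
If `bcd = a`, the point `P = (a, bd, d, 1)` is a common zero of the first row and the first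
column of the matrix. Its corner entry is `0`, so every term of the determinant is a product of
two forms vanishing at `P`, and the determinant is singular at `P`. But `f₄` is smooth in
characteristic `≠ 3`: `∂f₄/∂Y₄ = 3Y₄²` equals `3` at `P`. Hence `bcd ≠ a`, while
`(bcd)³ = -1 = a³`, so `bcd/a` is a primitive cube root of unity.
-/

section

variable {R σ : Type*} [CommRing R]

lemma eval_pderiv_mul_eq_zero {x : σ → R} {p q : MvPolynomial σ R} (i : σ)
    (hp : eval x p = 0) (hq : eval x q = 0) : eval x (pderiv i (p * q)) = 0 := by
  simp [Derivation.leibniz, hp, hq]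

lemma eval_pderiv_det_fin_three_eq_zero {x : σ → R}
    {M : Matrix (Fin 3) (Fin 3) (MvPolynomial σ R)} (i : σ) (h00 : M 0 0 = 0) (h01 : eval x (M 0 1) = 0) (h02 : eval x (M 0 2) = 0)
    (h10 : eval x (M 1 0) = 0) (h20 : eval x (M 2 0) = 0) :
    eval x (pderiv i M.det) = 0 := by
  have hdet : M.det = M 0 2 * (M 1 0 * M 2 1 - M 1 1 * M 2 0)
      - M 0 1 * (M 1 0 * M 2 2 - M 1 2 * M 2 0) := by
    rw [det_fin_three, h00]; ring
  have hminor : ∀ u v, eval x (M 1 0 * u - v * M 2 0) = 0 := by simp [h10, h20]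
  rw [hdet, map_sub, map_sub, eval_pderiv_mul_eq_zero i h02 (hminor _ _),
    eval_pderiv_mul_eq_zero i h01 (hminor _ _), sub_zero]

end

lemma sq_add_mul_add_sq_eq_zero_of_pow_three_eq {F : Type*} [Field F] {x y : F}
    (h : x ^ 3 = y ^ 3) (hne : x ≠ y) : x ^ 2 + y * x + y ^ 2 = 0 := by
  have hfac : (x - y) * (x ^ 2 + y * x + y ^ 2) = 0 := by linear_combination h
  exact (mul_eq_zero.mp hfac).resolve_left (sub_ne_zero.mpr hne)

lemma exists_cube_root_of_unity_mul_of_pow_three_eq {F : Type*} [Field F] {x y : F}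
    (h : x ^ 3 = y ^ 3) (hne : x ≠ y) (hy : y ≠ 0) :
    ∃ ε : F, ε ^ 3 = 1 ∧ ε ≠ 1 ∧ x = ε * y := by
  refine ⟨x / y, ?_, ?_, (div_mul_cancel₀ x hy).symm⟩
  · rw [div_pow, h, div_self (pow_ne_zero 3 hy)]
  · rwa [Ne, div_eq_one_iff_eq hy]

lemma eval_pderiv_three_f4 (K : Type) [Field K] (x : Fin 4 → K) :
    eval x (pderiv 3 (f4 K)) = 3 * x 3 ^ 2 := by
  simp [f4, Yv, pderiv_X]

lemma mul_mul_ne_of_det_eq_f4 {K : Type} [Field K] (h3 : (3 : K) ≠ 0) {a b c d : K}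
    {m n w t : S K}
    (hdet : (!![0, Yv K 1 - C a * Yv K 4, Yv K 2 - C b * Yv K 3;
        Yv K 1 - C c * Yv K 2, m, n;
        Yv K 3 - C d * Yv K 4, w, t]).det = f4 K) :
    b * c * d ≠ a := by
  intro habc
  have hsing : eval ![a, b * d, d, 1] (pderiv 3 (f4 K)) = 0 := by
    rw [← hdet]
    exact eval_pderiv_det_fin_three_eq_zero 3 rfl (by simp [Yv]) (by simp [Yv])
      (by simp [Yv, ← habc]; ring) (by simp [Yv])
  rw [eval_pderiv_three_f4] at hsing
  simp [h3] at hsing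

theorem stmt10_general (K : Type) [Field K] [CharZero K]
    (a b c d : K) (ha : a ^ 3 = -1) (hb : b ^ 3 = -1) (hc : c ^ 3 = -1) (hd : d ^ 3 = -1)
    (h : ∃ m n w t : S K, m.IsHomogeneous 1 ∧ n.IsHomogeneous 1 ∧
      w.IsHomogeneous 1 ∧ t.IsHomogeneous 1 ∧
      (!![0, Yv K 1 - C a * Yv K 4, Yv K 2 - C b * Yv K 3;
          Yv K 1 - C c * Yv K 2, m, n;
          Yv K 3 - C d * Yv K 4, w, t]).det = f4 K) :
    (b * c * d) ^ 2 + a * (b * c * d) + a ^ 2 = 0 ∧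
    ∃ ε : K, ε ^ 3 = 1 ∧ ε ≠ 1 ∧ b * c * d = ε * a := by
  obtain ⟨m, n, w, t, -, -, -, -, hdet⟩ := h
  have hne : b * c * d ≠ a := mul_mul_ne_of_det_eq_f4 three_ne_zero hdet
  have hcube : (b * c * d) ^ 3 = a ^ 3 := by rw [mul_pow, mul_pow, hb, hc, hd, ha]; norm_num
  have ha0 : a ≠ 0 := by rintro rfl; norm_num at ha
  exact ⟨sq_add_mul_add_sq_eq_zero_of_pow_three_eq hcube hne,
    exists_cube_root_of_unity_mul_of_pow_three_eq hcube hne ha0⟩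

theorem stmt10 (K : Type) [Field K] [IsAlgClosed K] [CharZero K]
    (a b c d : K) (ha : a ^ 3 = -1) (hb : b ^ 3 = -1) (hc : c ^ 3 = -1) (hd : d ^ 3 = -1)
    (h : ∃ m n w t : S K, m.IsHomogeneous 1 ∧ n.IsHomogeneous 1 ∧
      w.IsHomogeneous 1 ∧ t.IsHomogeneous 1 ∧
      (!![0, Yv K 1 - C a * Yv K 4, Yv K 2 - C b * Yv K 3;
          Yv K 1 - C c * Yv K 2, m, n;
          Yv K 3 - C d * Yv K 4, w, t]).det = f4 K) :
    (b * c * d) ^ 2 + a * (b * c * d) + a ^ 2 = 0 ∧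
    ∃ ε : K, ε ^ 3 = 1 ∧ ε ≠ 1 ∧ b * c * d = ε * a :=
  stmt10_general K a b c d ha hb hc hd h
end
end

section
/- For all b,c,d,ε ∈ K with b³ = c³ = d³ = −1, ε³ = 1, ε ≠ 1, and a = ε²bcd, the matrix α(b,c,d,ε) satisfies det α(b,c,d,ε) = f₄, and α(b,c,d,ε)·adj(α(b,c,d,ε)) = adj(α(b,c,d,ε))·α(b,c,d,ε) = f₄·I₃, where adj denotes the adjugate matrix; in particular α(b,c,d,ε) together with its adjugate is a matrix factorization of f₄, and the same holds for the transpose β(b,c,d,ε). -/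
open MvPolynomial Matrix TensorProduct

set_option maxHeartbeats 1000000
set_option synthInstance.maxHeartbeats 400000

noncomputable section

theorem stmt11 (K : Type) [Field K] [IsAlgClosed K] [CharZero K]
    (b c d ε : K) (hb : b ^ 3 = -1) (hc : c ^ 3 = -1) (hd : d ^ 3 = -1)
    (he : ε ^ 3 = 1) (hne : ε ≠ 1) :
    (alphaM K b c d ε).det = f4 K ∧
    alphaM K b c d ε * (alphaM K b c d ε).adjugate
      = f4 K • (1 : Matrix (Fin 3) (Fin 3) (S K)) ∧
    (alphaM K b c d ε).adjugate * alphaM K b c d ε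
      = f4 K • (1 : Matrix (Fin 3) (Fin 3) (S K)) ∧
    (betaM K b c d ε).det = f4 K ∧
    betaM K b c d ε * (betaM K b c d ε).adjugate
      = f4 K • (1 : Matrix (Fin 3) (Fin 3) (S K)) ∧
    (betaM K b c d ε).adjugate * betaM K b c d ε
      = f4 K • (1 : Matrix (Fin 3) (Fin 3) (S K)) := by
  have he2 : ε ^ 2 + ε + 1 = 0 := by
    have h : (ε - 1) * (ε ^ 2 + ε + 1) = 0 := by linear_combination he
    rcases mul_eq_zero.mp h with h' | h'
    · exact absurd (sub_eq_zero.mp h') hne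
    · exact h'
  set Cb : S K := C b with hCb
  set Cc : S K := C c with hCc
  set Cd : S K := C d with hCd
  set Ce : S K := C ε with hCe
  have hb' : Cb ^ 3 = -1 := by rw [hCb, ← C_pow, hb]; simp
  have hc' : Cc ^ 3 = -1 := by rw [hCc, ← C_pow, hc]; simp
  have hd' : Cd ^ 3 = -1 := by rw [hCd, ← C_pow, hd]; simp
  have he' : Ce ^ 2 + Ce + 1 = 0 := by
    rw [hCe, ← C_pow, ← C_1 (R := K), ← C_add, ← C_add, he2]; simp
  have hdet : (alphaM K b c d ε).det = f4 K := by
    simp only [alphaM, Matrix.det_fin_three, f4, Yv, Matrix.cons_val', Matrix.cons_val_zero,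
      Matrix.cons_val_one, Matrix.head_cons, Matrix.cons_val_two, Matrix.tail_cons,
      Matrix.empty_val', Matrix.cons_val_fin_one, Matrix.head_fin_const, Matrix.of_apply,
      _root_.map_mul, map_pow, ← hCb, ← hCc, ← hCd, ← hCe]
    linear_combination (-(X 2:S K)^3 + Cd * (X 2)^2 * (X 3) - Cc^3 * Cd * Ce^2 * (X 2)^2 * (X 3) - Cc^3 * Cd * Ce^4 * (X 2)^2 * (X 3) + Cc^3 * Cd^2 * Ce^2 * (X 2) * (X 3)^2 + Cc^3 * Cd^2 * Ce^4 * (X 2) * (X 3)^2 + Cc^3 * Cd^2 * Ce^6 * (X 2) * (X 3)^2 - Cc^3 * Cd^3 * Ce^6 * (X 3)^3) * hb'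
      + (-(X 1:S K)^3 + Cd * Ce^2 * (X 2)^2 * (X 3) + Cd * Ce^4 * (X 2)^2 * (X 3) - Cd^2 * Ce^2 * (X 2) * (X 3)^2 - Cd^2 * Ce^4 * (X 2) * (X 3)^2 - Cd^2 * Ce^6 * (X 2) * (X 3)^2 + Cd^3 * Ce^6 * (X 3)^3 + Cb^2 * (X 1) * (X 2)^2 + Cb^2 * Cd * Ce^2 * (X 1) * (X 2) * (X 3) + Cb^2 * Cd * Ce^4 * (X 1) * (X 2) * (X 3)) * hc'
      + (-Ce^6 * (X 3:S K)^3) * hd'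
      + (-(X 3:S K)^3 + Ce * (X 3)^3 - Ce^3 * (X 3)^3 + Ce^4 * (X 3)^3 - Cd * (X 2)^2 * (X 3) + Cd * Ce * (X 2)^2 * (X 3) - Cd * Ce^2 * (X 2)^2 * (X 3) + Cd^2 * Ce^2 * (X 2) * (X 3)^2 - Cd^2 * Ce^3 * (X 2) * (X 3)^2 + Cd^2 * Ce^4 * (X 2) * (X 3)^2 - Cb^2 * Cd * (X 1) * (X 2) * (X 3) + Cb^2 * Cd * Ce * (X 1) * (X 2) * (X 3) - Cb^2 * Cd * Ce^2 * (X 1) * (X 2) * (X 3) - Cb^2 * Cc^2 * Cd * (X 0) * (X 2) * (X 3) + Cb^2 * Cc^2 * Cd * Ce * (X 0) * (X 2) * (X 3) - Cb^2 * Cc^2 * Cd * Ce^2 * (X 0) * (X 2) * (X 3)) * he'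
  have hdetT : (betaM K b c d ε).det = f4 K := by
    rw [betaM, Matrix.det_transpose, hdet]
  refine ⟨hdet, ?_, ?_, hdetT, ?_, ?_⟩
  · rw [Matrix.mul_adjugate, hdet]
  · rw [Matrix.adjugate_mul, hdet]
  · rw [Matrix.mul_adjugate, hdetT]
  · rw [Matrix.adjugate_mul, hdetT]
end
end

section
/- For every ε ∈ K with ε³ = 1, ε ≠ 1, and every permutation (a,b,c) of the three cube roots of −1 in K, the matrices η(a,b,c,ε) and θ(a,b,c) both have determinant equal to f₄; in particular each of them, together with its adjugate matrix, forms a matrix factorization of f₄. -/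
open MvPolynomial Matrix TensorProduct

set_option maxHeartbeats 1000000
set_option synthInstance.maxHeartbeats 400000

noncomputable section

theorem stmt12 (K : Type) [Field K] [IsAlgClosed K] [CharZero K]
    (a b c ε : K) (habc : cubePerm K a b c) (he : ε ^ 3 = 1) (hne : ε ≠ 1) :
    (etaM K a b c ε).det = f4 K ∧
    (thetaM K a b c).det = f4 K ∧
    etaM K a b c ε * (etaM K a b c ε).adjugate
      = f4 K • (1 : Matrix (Fin 3) (Fin 3) (S K)) ∧
    (etaM K a b c ε).adjugate * etaM K a b c ε
      = f4 K • (1 : Matrix (Fin 3) (Fin 3) (S K)) ∧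
    thetaM K a b c * (thetaM K a b c).adjugate
      = f4 K • (1 : Matrix (Fin 3) (Fin 3) (S K)) ∧
    (thetaM K a b c).adjugate * thetaM K a b c
      = f4 K • (1 : Matrix (Fin 3) (Fin 3) (S K)) := by
  obtain ⟨ha, hb, hc, hab, hac, hbc⟩ := habc
  have qab : a ^ 2 + a * b + b ^ 2 = 0 := by
    rcases mul_eq_zero.mp (show (a - b) * (a ^ 2 + a * b + b ^ 2) = 0 by
      linear_combination ha - hb) with h | h
    · exact absurd (sub_eq_zero.mp h) hab
    · exact h
  have qac : a ^ 2 + a * c + c ^ 2 = 0 := by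
    rcases mul_eq_zero.mp (show (a - c) * (a ^ 2 + a * c + c ^ 2) = 0 by
      linear_combination ha - hc) with h | h
    · exact absurd (sub_eq_zero.mp h) hac
    · exact h
  have qbc : b ^ 2 + b * c + c ^ 2 = 0 := by
    rcases mul_eq_zero.mp (show (b - c) * (b ^ 2 + b * c + c ^ 2) = 0 by
      linear_combination hb - hc) with h | h
    · exact absurd (sub_eq_zero.mp h) hbc
    · exact h
  have h1 : a + b + c = 0 := by
    rcases mul_eq_zero.mp (show (b - c) * (a + b + c) = 0 by
      linear_combination qab - qac) with h | h
    · exact absurd (sub_eq_zero.mp h) hbc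
    · exact h
  have h2 : a * b + a * c + b * c = 0 := by
    linear_combination (-(1 : K) / 3) * (qab + qac + qbc) + ((2 : K) / 3) * (a + b + c) * h1
  have h3 : a * b * c = -1 := by
    linear_combination -c * qab + c * (a + b - c) * h1 + hc
  have hεq : ε ^ 2 + ε + 1 = 0 := by
    rcases mul_eq_zero.mp (show (ε - 1) * (ε ^ 2 + ε + 1) = 0 by
      linear_combination he) with h | h
    · exact absurd (sub_eq_zero.mp h) hne
    · exact h
  have r1 : a ^ 2 * b + a * b ^ 2 = 1 := by
    linear_combination a * b * h1 - h3
  have r2 : a ^ 3 * b ^ 3 = 1 := by rw [ha, hb]; ring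
  -- mapped versions in S K
  have Hε : (C ε : S K) ^ 2 + C ε + 1 = 0 := by
    have := congrArg (C : K →+* S K) hεq
    simpa using this
  have Hε3 : (C ε : S K) ^ 3 = 1 := by
    rw [← map_pow, he, C_1]
  have Hs : (C a : S K) + C b + C c = 0 := by
    have := congrArg (C : K →+* S K) h1
    simpa using this
  have Hp : (C a : S K) * C b + C a * C c + C b * C c = 0 := by
    have := congrArg (C : K →+* S K) h2
    simpa using this
  have Hm : (C a : S K) * C b * C c = -1 := by
    have := congrArg (C : K →+* S K) h3
    simpa using this
  have HR1 : (C a : S K) ^ 2 * C b + C a * C b ^ 2 = 1 := by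
    have := congrArg (C : K →+* S K) r1
    simpa using this
  have HR2 : (C a : S K) ^ 3 * C b ^ 3 = 1 := by
    have := congrArg (C : K →+* S K) r2
    simpa using this
  have hdet1 : (etaM K a b c ε).det = f4 K := by
    rw [Matrix.det_fin_three]
    simp only [etaM, f4, Yv, Matrix.cons_val', Matrix.cons_val_zero, Matrix.cons_val_one,
      Matrix.head_cons, Matrix.empty_val', Matrix.cons_val_fin_one, Matrix.head_fin_const,
      Matrix.cons_val_two, Matrix.tail_cons, Matrix.of_apply, C_pow]
    linear_combination (X 0 ^ 2 * X 1 + X 0 * X 1 ^ 2 : S K) * Hε +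
      (X 0 * X 1 ^ 2 + X 1 ^ 3 : S K) * Hε3 + (-(X 2 ^ 2 * X 3) : S K) * Hs +
      (X 2 * X 3 ^ 2 : S K) * Hp + (-(X 3 ^ 3) : S K) * Hm
  have hdet2 : (thetaM K a b c).det = f4 K := by
    rw [Matrix.det_fin_three]
    simp only [thetaM, f4, Yv, Matrix.cons_val', Matrix.cons_val_zero, Matrix.cons_val_one,
      Matrix.head_cons, Matrix.empty_val', Matrix.cons_val_fin_one, Matrix.head_fin_const,
      Matrix.cons_val_two, Matrix.tail_cons, Matrix.of_apply, C_pow, C_mul]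
    linear_combination (-(X 0 ^ 2 * X 2) - X 0 * X 2 ^ 2 : S K) * HR1 +
      (X 0 * X 2 ^ 2 + X 2 ^ 3 : S K) * HR2 + (-(X 1 ^ 2 * X 3) : S K) * Hs +
      (X 1 * X 3 ^ 2 : S K) * Hp + (-(X 3 ^ 3) : S K) * Hm
  refine ⟨hdet1, hdet2, ?_, ?_, ?_, ?_⟩
  · rw [Matrix.mul_adjugate, hdet1]
  · rw [Matrix.adjugate_mul, hdet1]
  · rw [Matrix.mul_adjugate, hdet2]
  · rw [Matrix.adjugate_mul, hdet2]
end
end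

section
/- Let α, γ ∈ 𝓛₁, β ∈ 𝓛_j, δ ∈ 𝓛_i (for some i,j ∈ {2,3,4}) be linearly independent linear forms, and let m,n,w,t and m',n',w',t' be linear forms in S such that the matrices φ = [[0,α,β],[γ,m,n],[δ,w,t]] and φ' = [[0,α,β],[γ,m',n'],[δ,w',t']] both have determinant f₄. Then Coker φ ≅ Coker φ' as R₄-modules; indeed φ' is obtained from φ by elementary row and column transformations over S. -/
open MvPolynomial Matrix TensorProduct

set_option maxHeartbeats 1000000
set_option synthInstance.maxHeartbeats 400000

noncomputable section

namespace Stmt13Aux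

open MvPolynomial

variable {K : Type} [Field K]

lemma single_of_sum (d : Fin 4 →₀ ℕ) (hd : ∑ i, d i = 1) :
    ∃ i : Fin 4, d = Finsupp.single i 1 := by
  rw [Fin.sum_univ_four] at hd
  have h : (d 0 = 1 ∧ d 1 = 0 ∧ d 2 = 0 ∧ d 3 = 0) ∨ (d 1 = 1 ∧ d 0 = 0 ∧ d 2 = 0 ∧ d 3 = 0)
      ∨ (d 2 = 1 ∧ d 0 = 0 ∧ d 1 = 0 ∧ d 3 = 0) ∨ (d 3 = 1 ∧ d 0 = 0 ∧ d 1 = 0 ∧ d 2 = 0) := by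
    omega
  rcases h with ⟨h1,h2,h3,h4⟩|⟨h1,h2,h3,h4⟩|⟨h1,h2,h3,h4⟩|⟨h1,h2,h3,h4⟩
  · exact ⟨0, Finsupp.ext fun k => by fin_cases k <;> simp_all [Finsupp.single_apply]⟩
  · exact ⟨1, Finsupp.ext fun k => by fin_cases k <;> simp_all [Finsupp.single_apply]⟩
  · exact ⟨2, Finsupp.ext fun k => by fin_cases k <;> simp_all [Finsupp.single_apply]⟩
  · exact ⟨3, Finsupp.ext fun k => by fin_cases k <;> simp_all [Finsupp.single_apply]⟩

lemma lin_ext {p : S K} (hp : p.IsHomogeneous 1)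
    (h : ∀ i : Fin 4, coeff (Finsupp.single i 1) p = 0) : p = 0 := by
  ext d
  rw [coeff_zero]
  by_contra hc
  have h1 : Finsupp.degree d = 1 := by rw [Finsupp.degree_eq_weight_one]; exact hp hc
  have hs : ∑ i : Fin 4, d i = 1 := by
    rw [← h1]
    simp only [Finsupp.degree]
    exact (Finset.sum_subset (Finset.subset_univ _) (fun x _ hx =>
      Finsupp.notMem_support_iff.mp hx)).symm
  obtain ⟨i, rfl⟩ := single_of_sum d hs
  exact hc (h i)

lemma lin_decomp {p : S K} (hp : p.IsHomogeneous 1) :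
    p = ∑ i : Fin 4, C (coeff (Finsupp.single i 1) p) * X i := by
  rw [← sub_eq_zero]
  apply lin_ext
  · exact Submodule.sub_mem (homogeneousSubmodule (Fin 4) K 1) hp
      (Submodule.sum_mem _ (fun i _ => (isHomogeneous_X K i).C_mul _))
  · intro i
    rw [coeff_sub, MvPolynomial.coeff_sum]
    simp [coeff_C_mul, coeff_X', Finsupp.single_left_inj (one_ne_zero : (1:ℕ) ≠ 0),
      mul_ite, Finset.sum_ite_eq']

lemma eval_lin (y : Fin 4 → K) {p : S K} (hp : p.IsHomogeneous 1) :
    eval y p = ∑ i, coeff (Finsupp.single i 1) p * y i := by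
  conv_lhs => rw [lin_decomp hp]
  simp

lemma Yv_hom {k : ℕ} (h1 : 1 ≤ k) (h4 : k ≤ 4) : (Yv K k).IsHomogeneous 1 := by
  interval_cases k <;> exact isHomogeneous_X _ _

lemma Lset_hom {k : ℕ} (hk : 1 ≤ k) {p : S K} (hp : p ∈ Lset K k) :
    p.IsHomogeneous 1 := by
  obtain ⟨a, l, -, hkl, hl4, rfl⟩ := hp
  exact Submodule.sub_mem (homogeneousSubmodule (Fin 4) K 1)
    (Yv_hom hk (by omega)) ((Yv_hom (by omega) hl4).C_mul a)

end Stmt13Aux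

theorem stmt13 (K : Type) [Field K] [IsAlgClosed K] [CharZero K]
    (i j : ℕ) (hi : i ∈ ({2, 3, 4} : Set ℕ)) (hj : j ∈ ({2, 3, 4} : Set ℕ))
    (α β γ δ m n w t m' n' w' t' : S K)
    (hα : α ∈ Lset K 1) (hγ : γ ∈ Lset K 1) (hβ : β ∈ Lset K j) (hδ : δ ∈ Lset K i)
    (hind : LinearIndependent K ![α, β, γ, δ])
    (hm : m.IsHomogeneous 1) (hn : n.IsHomogeneous 1)
    (hw : w.IsHomogeneous 1) (ht : t.IsHomogeneous 1)
    (hm' : m'.IsHomogeneous 1) (hn' : n'.IsHomogeneous 1)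
    (hw' : w'.IsHomogeneous 1) (ht' : t'.IsHomogeneous 1)
    (hdet : (!![0, α, β; γ, m, n; δ, w, t]).det = f4 K)
    (hdet' : (!![0, α, β; γ, m', n'; δ, w', t']).det = f4 K) :
    Nonempty
      (coker K !![0, α, β; γ, m, n; δ, w, t] ≃ₗ[R4 K]
        coker K !![0, α, β; γ, m', n'; δ, w', t']) ∧
    ∃ U V : Matrix (Fin 3) (Fin 3) (S K), U.det = 1 ∧ V.det = 1 ∧
      U * !![0, α, β; γ, m, n; δ, w, t] * V = !![0, α, β; γ, m', n'; δ, w', t'] := by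
  classical
  simp only [Set.mem_insert_iff, Set.mem_singleton_iff] at hi hj
  have hj1 : 1 ≤ j := by omega
  have hi1 : 1 ≤ i := by omega
  have hαh := Stmt13Aux.Lset_hom le_rfl hα
  have hγh := Stmt13Aux.Lset_hom le_rfl hγ
  have hβh := Stmt13Aux.Lset_hom hj1 hβ
  have hδh := Stmt13Aux.Lset_hom hi1 hδ
  set Lm : S K →ₗ[K] (Fin 4 → K) :=
    LinearMap.pi (fun k => lcoeff K (Finsupp.single k 1)) with hLmdef
  have hLmapp : ∀ (p₀ : S K) (k : Fin 4), Lm p₀ k = coeff (Finsupp.single k 1) p₀ :=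
    fun p₀ k => rfl
  have hker : ∀ p₀ : S K, p₀.IsHomogeneous 1 → Lm p₀ = 0 → p₀ = 0 := by
    intro p₀ hp h0
    exact Stmt13Aux.lin_ext hp (fun k => by rw [← hLmapp p₀ k, h0]; rfl)
  have hspan : Submodule.span K (Set.range ![α, β, γ, δ]) ≤ homogeneousSubmodule (Fin 4) K 1 := by
    rw [Submodule.span_le]
    rintro y ⟨k, rfl⟩
    fin_cases k
    exacts [hαh, hβh, hγh, hδh]
  have hindK : LinearIndependent K ![Lm α, Lm β, Lm γ, Lm δ] := by
    have h2 : Disjoint (Submodule.span K (Set.range ![α, β, γ, δ])) (LinearMap.ker Lm) := by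
      rw [Submodule.disjoint_def]
      intro x hx hk
      exact hker x (hspan hx) (LinearMap.mem_ker.mp hk)
    have h3 := hind.map h2
    have h4 : ![Lm α, Lm β, Lm γ, Lm δ] = Lm ∘ ![α, β, γ, δ] := by
      funext k; fin_cases k <;> rfl
    rw [h4]; exact h3
  set A : Matrix (Fin 4) (Fin 4) K := Matrix.of ![Lm α, Lm β, Lm γ, Lm δ] with hAdef
  have hA : IsUnit A := by
    rw [← Matrix.linearIndependent_rows_iff_isUnit]
    exact hindK
  have hAdet : IsUnit A.det := (Matrix.isUnit_iff_isUnit_det A).mp hA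
  have hATdet : IsUnit A.transpose.det := by rwa [Matrix.det_transpose]
  have hsurj : ∀ x : Fin 4 → K, ∃ y : Fin 4 → K, A.mulVec y = x := by
    intro x
    refine ⟨A⁻¹.mulVec x, ?_⟩
    rw [Matrix.mulVec_mulVec, Matrix.mul_nonsing_inv _ hAdet, Matrix.one_mulVec]
  have key : ∀ p₀ : S K, p₀.IsHomogeneous 1 → ∃ c : Fin 4 → K,
      p₀ = C (c 0) * α + C (c 1) * β + C (c 2) * γ + C (c 3) * δ := by
    intro p₀ hp
    refine ⟨(A.transpose)⁻¹.mulVec (Lm p₀), ?_⟩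
    set c := (A.transpose)⁻¹.mulVec (Lm p₀) with hc
    have h1 : A.transpose.mulVec c = Lm p₀ := by
      rw [hc, Matrix.mulVec_mulVec, Matrix.mul_nonsing_inv _ hATdet, Matrix.one_mulVec]
    have h2 : ∀ k : Fin 4, coeff (Finsupp.single k 1) p₀
        = c 0 * Lm α k + c 1 * Lm β k + c 2 * Lm γ k + c 3 * Lm δ k := by
      intro k
      have h3 := congrFun h1 k
      rw [← hLmapp p₀ k, ← h3]
      simp only [Matrix.mulVec, dotProduct, Fin.sum_univ_four, Matrix.transpose_apply, hAdef,
        Matrix.of_apply, Matrix.cons_val_zero, Matrix.cons_val_one, Matrix.head_cons,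
        Matrix.cons_val_two, Matrix.tail_cons, Matrix.cons_val_three]
      ring
    rw [← sub_eq_zero]
    apply Stmt13Aux.lin_ext
    · exact Submodule.sub_mem (homogeneousSubmodule (Fin 4) K 1) hp
        (Submodule.add_mem _ (Submodule.add_mem _
          (Submodule.add_mem _ (hαh.C_mul _) (hβh.C_mul _)) (hγh.C_mul _)) (hδh.C_mul _))
    · intro k
      rw [coeff_sub]
      simp only [coeff_add, coeff_C_mul]
      rw [h2 k]
      simp only [hLmapp]
      ring
  obtain ⟨cm, hmE⟩ := key m hm
  obtain ⟨cn, hnE⟩ := key n hn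
  obtain ⟨cw, hwE⟩ := key w hw
  obtain ⟨ct, htE⟩ := key t ht
  obtain ⟨cm', hmE'⟩ := key m' hm'
  obtain ⟨cn', hnE'⟩ := key n' hn'
  obtain ⟨cw', hwE'⟩ := key w' hw'
  obtain ⟨ct', htE'⟩ := key t' ht'
  simp [Matrix.det_fin_three] at hdet hdet'
  have master : ∀ x0 x1 x2 x3 : K,
      x1 * (x2 * (cw 0 * x0 + cw 1 * x1 + cw 2 * x2 + cw 3 * x3)
        - (cm 0 * x0 + cm 1 * x1 + cm 2 * x2 + cm 3 * x3) * x3)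
      - x0 * (x2 * (ct 0 * x0 + ct 1 * x1 + ct 2 * x2 + ct 3 * x3)
        - (cn 0 * x0 + cn 1 * x1 + cn 2 * x2 + cn 3 * x3) * x3)
      = x1 * (x2 * (cw' 0 * x0 + cw' 1 * x1 + cw' 2 * x2 + cw' 3 * x3)
        - (cm' 0 * x0 + cm' 1 * x1 + cm' 2 * x2 + cm' 3 * x3) * x3)
      - x0 * (x2 * (ct' 0 * x0 + ct' 1 * x1 + ct' 2 * x2 + ct' 3 * x3)
        - (cn' 0 * x0 + cn' 1 * x1 + cn' 2 * x2 + cn' 3 * x3) * x3) := by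
    intro x0 x1 x2 x3
    obtain ⟨y, hy⟩ := hsurj ![x0, x1, x2, x3]
    have egen : ∀ (k : Fin 4) (p₀ : S K), p₀.IsHomogeneous 1 → A k = Lm p₀ →
        eval y p₀ = ![x0, x1, x2, x3] k := by
      intro k p₀ hp hk
      rw [Stmt13Aux.eval_lin y hp, ← congrFun hy k]
      simp only [Matrix.mulVec, dotProduct]
      refine Finset.sum_congr rfl (fun l _ => ?_)
      rw [show A k l = coeff (Finsupp.single l 1) p₀ from by rw [hk]; rfl]
    have e0 : eval y α = x0 := by simpa using egen 0 α hαh rfl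
    have e1 : eval y β = x1 := by simpa using egen 1 β hβh rfl
    have e2 : eval y γ = x2 := by
      simpa [Matrix.cons_val_two, Matrix.tail_cons, Matrix.head_cons] using egen 2 γ hγh rfl
    have e3 : eval y δ = x3 := by
      simpa [Matrix.cons_val_three, Matrix.tail_cons, Matrix.head_cons] using egen 3 δ hδh rfl
    have em : eval y m = cm 0 * x0 + cm 1 * x1 + cm 2 * x2 + cm 3 * x3 := by
      rw [hmE]; simp only [map_add, _root_.map_mul, eval_C, e0, e1, e2, e3]
    have en : eval y n = cn 0 * x0 + cn 1 * x1 + cn 2 * x2 + cn 3 * x3 := by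
      rw [hnE]; simp only [map_add, _root_.map_mul, eval_C, e0, e1, e2, e3]
    have ew : eval y w = cw 0 * x0 + cw 1 * x1 + cw 2 * x2 + cw 3 * x3 := by
      rw [hwE]; simp only [map_add, _root_.map_mul, eval_C, e0, e1, e2, e3]
    have et : eval y t = ct 0 * x0 + ct 1 * x1 + ct 2 * x2 + ct 3 * x3 := by
      rw [htE]; simp only [map_add, _root_.map_mul, eval_C, e0, e1, e2, e3]
    have em' : eval y m' = cm' 0 * x0 + cm' 1 * x1 + cm' 2 * x2 + cm' 3 * x3 := by
      rw [hmE']; simp only [map_add, _root_.map_mul, eval_C, e0, e1, e2, e3]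
    have en' : eval y n' = cn' 0 * x0 + cn' 1 * x1 + cn' 2 * x2 + cn' 3 * x3 := by
      rw [hnE']; simp only [map_add, _root_.map_mul, eval_C, e0, e1, e2, e3]
    have ew' : eval y w' = cw' 0 * x0 + cw' 1 * x1 + cw' 2 * x2 + cw' 3 * x3 := by
      rw [hwE']; simp only [map_add, _root_.map_mul, eval_C, e0, e1, e2, e3]
    have et' : eval y t' = ct' 0 * x0 + ct' 1 * x1 + ct' 2 * x2 + ct' 3 * x3 := by
      rw [htE']; simp only [map_add, _root_.map_mul, eval_C, e0, e1, e2, e3]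
    have H1 := congrArg (eval y) hdet
    have H2 := congrArg (eval y) hdet'
    simp only [map_add, map_sub, _root_.map_mul, map_neg, map_zero,
      em, en, ew, et, em', en', ew', et', e0, e1, e2, e3] at H1 H2
    linear_combination H1 - H2
  have r_t0 : ct' 0 = ct 0 := by
    linear_combination ((1:K)/2) * master 1 0 1 0 + (-(1:K)/2) * master 1 0 (-1) 0
  have r_t2 : ct' 2 = ct 2 := by
    linear_combination ((1:K)/2) * master 1 0 1 0 + ((1:K)/2) * master 1 0 (-1) 0
  have r_n0 : cn' 0 = cn 0 := by
    linear_combination (-(1:K)/2) * master 1 0 0 1 + ((1:K)/2) * master 1 0 0 (-1)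
  have r_n3 : cn' 3 = cn 3 := by
    linear_combination (-(1:K)/2) * master 1 0 0 1 + (-(1:K)/2) * master 1 0 0 (-1)
  have r_w1 : cw' 1 = cw 1 := by
    linear_combination (-(1:K)/2) * master 0 1 1 0 + ((1:K)/2) * master 0 1 (-1) 0
  have r_w2 : cw' 2 = cw 2 := by
    linear_combination (-(1:K)/2) * master 0 1 1 0 + (-(1:K)/2) * master 0 1 (-1) 0
  have r_m1 : cm' 1 = cm 1 := by
    linear_combination ((1:K)/2) * master 0 1 0 1 + (-(1:K)/2) * master 0 1 0 (-1)
  have r_m3 : cm' 3 = cm 3 := by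
    linear_combination ((1:K)/2) * master 0 1 0 1 + ((1:K)/2) * master 0 1 0 (-1)
  have r_q : cn' 2 - cn 2 = ct' 3 - ct 3 := by
    linear_combination -master 1 0 1 1 + r_t0 + r_t2 - r_n0 - r_n3
  have r_v : cw' 0 - cw 0 = ct' 1 - ct 1 := by
    linear_combination -master 1 1 1 0 + r_t0 + r_t2 - r_w1 - r_w2
  have r_u : cm' 0 - cm 0 = cn' 1 - cn 1 := by
    linear_combination master 1 1 0 1 - r_m1 - r_m3 + r_n0 + r_n3
  have r_p : cm' 2 - cm 2 = cw' 3 - cw 3 := by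
    linear_combination master 0 1 1 1 + r_w1 + r_w2 - r_m1 - r_m3
  -- the polynomial relations
  have cr_u := congrArg (⇑(C : K →+* S K)) r_u
  have cr_p := congrArg (⇑(C : K →+* S K)) r_p
  have cr_v := congrArg (⇑(C : K →+* S K)) r_v
  have cr_q := congrArg (⇑(C : K →+* S K)) r_q
  simp only [map_sub] at cr_u cr_p cr_v cr_q
  have hm'eq : m' = m + (C (cm' 0) - C (cm 0)) * α + (C (cm' 2) - C (cm 2)) * γ := by
    rw [hmE', hmE, r_m1, r_m3]; ring
  have hn'eq : n' = n + (C (cm' 0) - C (cm 0)) * β + (C (cn' 2) - C (cn 2)) * γ := by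
    rw [hnE', hnE, r_n0, r_n3]; linear_combination (-β) * cr_u
  have hw'eq : w' = w + (C (cw' 0) - C (cw 0)) * α + (C (cm' 2) - C (cm 2)) * δ := by
    rw [hwE', hwE, r_w1, r_w2]; linear_combination (-δ) * cr_p
  have ht'eq : t' = t + (C (cw' 0) - C (cw 0)) * β + (C (cn' 2) - C (cn 2)) * δ := by
    rw [htE', htE, r_t0, r_t2]; linear_combination (-β) * cr_v + (-δ) * cr_q
  set Φ : Matrix (Fin 3) (Fin 3) (S K) := !![0, α, β; γ, m, n; δ, w, t] with hΦ
  set Φ' : Matrix (Fin 3) (Fin 3) (S K) := !![0, α, β; γ, m', n'; δ, w', t'] with hΦ'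
  set U : Matrix (Fin 3) (Fin 3) (S K) :=
    !![1, 0, 0; C (cm' 0) - C (cm 0), 1, 0; C (cw' 0) - C (cw 0), 0, 1] with hU
  set V : Matrix (Fin 3) (Fin 3) (S K) :=
    !![1, C (cm' 2) - C (cm 2), C (cn' 2) - C (cn 2); 0, 1, 0; 0, 0, 1] with hV
  set Uinv : Matrix (Fin 3) (Fin 3) (S K) :=
    !![1, 0, 0; C (cm 0) - C (cm' 0), 1, 0; C (cw 0) - C (cw' 0), 0, 1] with hUinv
  set Vinv : Matrix (Fin 3) (Fin 3) (S K) :=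
    !![1, C (cm 2) - C (cm' 2), C (cn 2) - C (cn' 2); 0, 1, 0; 0, 0, 1] with hVinv
  have hdetU : U.det = 1 := by
    rw [hU, Matrix.det_fin_three]
    simp [Matrix.vecHead, Matrix.vecTail]
  have hdetV : V.det = 1 := by
    rw [hV, Matrix.det_fin_three]
    simp [Matrix.vecHead, Matrix.vecTail]
  have hprod : U * Φ * V = Φ' := by
    refine Matrix.ext fun r0 c0 => ?_
    fin_cases r0 <;> fin_cases c0 <;>
      simp [hU, hV, hΦ, hΦ', Matrix.mul_apply, Fin.sum_univ_three, Matrix.vecHead,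
        Matrix.vecTail] <;>
      first
        | ring1
        | linear_combination hm'eq
        | linear_combination hn'eq
        | linear_combination hw'eq
        | linear_combination ht'eq
        | linear_combination -hm'eq
        | linear_combination -hn'eq
        | linear_combination -hw'eq
        | linear_combination -ht'eq
  have hU1 : U * Uinv = 1 := by
    refine Matrix.ext fun r0 c0 => ?_
    fin_cases r0 <;> fin_cases c0 <;>
      simp [hU, hUinv, Matrix.mul_apply, Fin.sum_univ_three, Matrix.one_apply, Matrix.vecHead,
        Matrix.vecTail]
  have hU2 : Uinv * U = 1 := by
    refine Matrix.ext fun r0 c0 => ?_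
    fin_cases r0 <;> fin_cases c0 <;>
      simp [hU, hUinv, Matrix.mul_apply, Fin.sum_univ_three, Matrix.one_apply, Matrix.vecHead,
        Matrix.vecTail]
  have hV1 : V * Vinv = 1 := by
    refine Matrix.ext fun r0 c0 => ?_
    fin_cases r0 <;> fin_cases c0 <;>
      simp [hV, hVinv, Matrix.mul_apply, Fin.sum_univ_three, Matrix.one_apply, Matrix.vecHead,
        Matrix.vecTail]
  have hV2 : Vinv * V = 1 := by
    refine Matrix.ext fun r0 c0 => ?_
    fin_cases r0 <;> fin_cases c0 <;>
      simp [hV, hVinv, Matrix.mul_apply, Fin.sum_univ_three, Matrix.one_apply, Matrix.vecHead,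
        Matrix.vecTail]
  have compU1 : mbar K U ∘ₗ mbar K Uinv = LinearMap.id := by
    rw [← Matrix.mulVecLin_mul, ← Matrix.map_mul, hU1,
      Matrix.map_one _ (map_zero _) (_root_.map_one _), Matrix.mulVecLin_one]
  have compU2 : mbar K Uinv ∘ₗ mbar K U = LinearMap.id := by
    rw [← Matrix.mulVecLin_mul, ← Matrix.map_mul, hU2,
      Matrix.map_one _ (map_zero _) (_root_.map_one _), Matrix.mulVecLin_one]
  have compV1 : mbar K V ∘ₗ mbar K Vinv = LinearMap.id := by
    rw [← Matrix.mulVecLin_mul, ← Matrix.map_mul, hV1,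
      Matrix.map_one _ (map_zero _) (_root_.map_one _), Matrix.mulVecLin_one]
  have compV2 : mbar K Vinv ∘ₗ mbar K V = LinearMap.id := by
    rw [← Matrix.mulVecLin_mul, ← Matrix.map_mul, hV2,
      Matrix.map_one _ (map_zero _) (_root_.map_one _), Matrix.mulVecLin_one]
  let eU : (Fin 3 → R4 K) ≃ₗ[R4 K] (Fin 3 → R4 K) :=
    LinearEquiv.ofLinear (mbar K U) (mbar K Uinv) compU1 compU2
  let eV : (Fin 3 → R4 K) ≃ₗ[R4 K] (Fin 3 → R4 K) :=
    LinearEquiv.ofLinear (mbar K V) (mbar K Vinv) compV1 compV2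
  have hVtop : LinearMap.range (mbar K V) = ⊤ := LinearMap.range_eq_top.mpr eV.surjective
  have hmap : (LinearMap.range (mbar K Φ)).map (eU : (Fin 3 → R4 K) →ₗ[R4 K] (Fin 3 → R4 K))
      = LinearMap.range (mbar K Φ') := by
    have h1 : (eU : (Fin 3 → R4 K) →ₗ[R4 K] (Fin 3 → R4 K)) = mbar K U := rfl
    rw [h1, ← LinearMap.range_comp]
    have h2 : mbar K U ∘ₗ mbar K Φ = Matrix.mulVecLin ((U * Φ).map ⇑(proj K)) := by
      rw [Matrix.map_mul, Matrix.mulVecLin_mul]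
    have h3 : Matrix.mulVecLin ((U * Φ).map ⇑(proj K)) ∘ₗ mbar K V = mbar K Φ' := by
      rw [← Matrix.mulVecLin_mul, ← Matrix.map_mul, hprod]
    rw [h2, ← h3, LinearMap.range_comp_of_range_eq_top _ hVtop]
  exact ⟨⟨Submodule.Quotient.equiv _ _ eU hmap⟩, U, V, hdetU, hdetV, hprod⟩
end
end

section
/- If Coker η(a,b,c,ε) ≅ Coker η(a',b',c',ε') as R₄-modules then (a,b,c,ε) = (a',b',c',ε'); if Coker θ(a,b,c) ≅ Coker θ(a',b',c') then (a,b,c) = (a',b',c'); and no module Coker η(a,b,c,ε) is isomorphic to a module Coker θ(a',b',c'). Here (a,b,c) and (a',b',c') range over permutations of the three cube roots of −1 and ε, ε' over the primitive cube roots of unity. -/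
open MvPolynomial Matrix TensorProduct

set_option maxHeartbeats 1000000
set_option synthInstance.maxHeartbeats 400000

noncomputable section

section Aux
variable {K : Type} [Field K]

/-- Substitution `Yᵢ ↦ yᵢ · t` into a single (univariate-in-t) polynomial. -/
def phit (y : Fin 4 → K) : S K →ₐ[K] Polynomial K :=
  MvPolynomial.aeval (fun i => Polynomial.C (y i) * Polynomial.X)

def ev0 : S K → K := MvPolynomial.eval (fun _ => (0 : K))

lemma phit_coeff_zero (y : Fin 4 → K) (p : S K) :
    ((phit y) p).coeff 0 = ev0 p := by
  induction p using MvPolynomial.induction_on with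
  | C a => simp [phit, ev0]
  | add p q hp hq => simp [map_add, Polynomial.coeff_add, hp, hq, ev0]
  | mul_X p i hp =>
      simp [phit, _root_.map_mul, Polynomial.mul_coeff_zero, ev0] at hp ⊢

lemma coeff1_mul_CX (p : Polynomial K) (m : K) :
    (p * (Polynomial.C m * Polynomial.X)).coeff 1 = p.coeff 0 * m := by
  rw [← mul_assoc, Polynomial.coeff_mul_X, Polynomial.mul_coeff_zero,
    Polynomial.coeff_C_zero]

lemma coeff1_CX_mul (q : Polynomial K) (m : K) :
    ((Polynomial.C m * Polynomial.X) * q).coeff 1 = m * q.coeff 0 := by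
  rw [mul_comm, coeff1_mul_CX, mul_comm]

lemma Yv1 : Yv K 1 = X 0 := rfl
lemma Yv2 : Yv K 2 = X 1 := rfl
lemma Yv3 : Yv K 3 = X 2 := rfl
lemma Yv4 : Yv K 4 = X 3 := rfl

lemma phit_f4 (y : Fin 4 → K) :
    (phit y) (f4 K) =
      Polynomial.C (y 0 ^ 3 + y 1 ^ 3 + y 2 ^ 3 + y 3 ^ 3) * Polynomial.X ^ 3 := by
  rw [f4, Yv1, Yv2, Yv3, Yv4]
  simp only [map_add, map_pow, phit, MvPolynomial.aeval_X, Polynomial.C_add, Polynomial.C_pow]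
  ring

lemma coeff1_f4_mul (y : Fin 4 → K) (q : Polynomial K) :
    ((phit y) (f4 K) * q).coeff 1 = 0 := by
  rw [phit_f4, mul_assoc, mul_comm (Polynomial.X ^ 3) q, ← mul_assoc,
    Polynomial.coeff_mul_X_pow']
  simp

end Aux
section Key
variable {K : Type} [Field K]

lemma lift_map (M M' : Matrix (Fin 3) (Fin 3) (S K))
    (g : coker K M →ₗ[R4 K] coker K M') :
    ∃ A B : Matrix (Fin 3) (Fin 3) (S K),
      (∀ i j, ∃ cc : S K, (A * M) i j = (M' * B) i j + f4 K * cc) ∧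
      (∀ x : Fin 3 → R4 K,
        Submodule.Quotient.mk ((A.map ⇑(proj K)) *ᵥ x) =
          g (Submodule.Quotient.mk x)) := by
  have hsurj : Function.Surjective
      (Submodule.Quotient.mk (p := LinearMap.range (mbar K M'))) :=
    Submodule.Quotient.mk_surjective _
  choose w hw using fun j : Fin 3 =>
    hsurj (g (Submodule.Quotient.mk (Pi.single j 1)))
  have hps : Function.Surjective ⇑(proj K) := Ideal.Quotient.mk_surjective
  choose Ar hAr using fun i j : Fin 3 => hps (w j i)
  set A : Matrix (Fin 3) (Fin 3) (S K) := Matrix.of Ar with hA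
  have hAmap : ∀ j, (A.map ⇑(proj K)).transpose j = w j := by
    intro j; funext i; exact hAr i j
  have hAfull : ∀ x : Fin 3 → R4 K,
      Submodule.Quotient.mk ((A.map ⇑(proj K)) *ᵥ x) = g (Submodule.Quotient.mk x) := by
    have hc : (Submodule.mkQ (LinearMap.range (mbar K M'))) ∘ₗ
        Matrix.mulVecLin (A.map ⇑(proj K)) =
        g ∘ₗ Submodule.mkQ (LinearMap.range (mbar K M)) := by
      apply Module.Basis.ext (Pi.basisFun (R4 K) (Fin 3))
      intro j
      simp only [LinearMap.comp_apply, Pi.basisFun_apply, Matrix.mulVecLin_apply,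
        Matrix.mulVec_single_one, Submodule.mkQ_apply]
      rw [← hw j]; exact congrArg _ (hAmap j)
    intro x
    simpa using DFunLike.congr_fun hc x
  have hcol : ∀ j : Fin 3, ∃ uu : Fin 3 → R4 K,
      (M'.map ⇑(proj K)) *ᵥ uu =
        ((A.map ⇑(proj K)) * (M.map ⇑(proj K))) *ᵥ (Pi.single j 1) := by
    intro j
    have h0 : Submodule.Quotient.mk (p := LinearMap.range (mbar K M))
        ((M.map ⇑(proj K)) *ᵥ (Pi.single j 1)) = 0 := by
      rw [Submodule.Quotient.mk_eq_zero]
      exact ⟨Pi.single j 1, rfl⟩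
    have h1 := hAfull ((M.map ⇑(proj K)) *ᵥ (Pi.single j 1))
    rw [h0, map_zero, Matrix.mulVec_mulVec] at h1
    have hmem := (Submodule.Quotient.mk_eq_zero _).mp h1
    obtain ⟨uu, huu⟩ := hmem
    exact ⟨uu, huu⟩
  choose u hu using hcol
  choose Br hBr using fun i j : Fin 3 => hps (u j i)
  set B : Matrix (Fin 3) (Fin 3) (S K) := Matrix.of Br with hB
  have hBmap : ∀ j, (B.map ⇑(proj K)).transpose j = u j := by
    intro j; funext i; exact hBr i j
  have hmat : (A * M).map ⇑(proj K) = (M' * B).map ⇑(proj K) := by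
    rw [Matrix.map_mul, Matrix.map_mul]
    ext i j
    have e1 : ((A.map ⇑(proj K)) * (M.map ⇑(proj K))) i j
        = (((A.map ⇑(proj K)) * (M.map ⇑(proj K))) *ᵥ (Pi.single j 1)) i := by
      rw [Matrix.mulVec_single_one]; rfl
    have e2 : ((M'.map ⇑(proj K)) * (B.map ⇑(proj K))) i j
        = (((M'.map ⇑(proj K)) * (B.map ⇑(proj K))) *ᵥ (Pi.single j 1)) i := by
      rw [Matrix.mulVec_single_one]; rfl
    have e3 : (B.map ⇑(proj K)) *ᵥ (Pi.single j 1) = u j := by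
      rw [Matrix.mulVec_single_one]; exact hBmap j
    rw [e1, e2, ← Matrix.mulVec_mulVec (Pi.single j 1) (M'.map ⇑(proj K)) (B.map ⇑(proj K)),
      e3, hu j]
  refine ⟨A, B, ?_, hAfull⟩
  intro i j
  have hz : proj K ((A * M) i j - (M' * B) i j) = 0 := by
    have h2 : proj K ((A * M) i j) = proj K ((M' * B) i j) := by
      have := congrFun (congrFun hmat i) j
      simpa [Matrix.map_apply] using this
    rw [map_sub, h2, sub_self]
  rw [Ideal.Quotient.eq_zero_iff_mem, Ideal.mem_span_singleton] at hz
  obtain ⟨cc, hcc⟩ := hz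
  exact ⟨cc, by rw [← hcc]; ring⟩


lemma ev0_f4 : ev0 (f4 K) = 0 := by
  simp [ev0, f4, Yv1, Yv2, Yv3, Yv4]

lemma key {M M' : Matrix (Fin 3) (Fin 3) (S K)}
    {Mev M'ev : (Fin 4 → K) → Matrix (Fin 3) (Fin 3) K}
    (hMev : ∀ y i j, (phit y) (M i j) = Polynomial.C (Mev y i j) * Polynomial.X)
    (hM'ev : ∀ y i j, (phit y) (M' i j) = Polynomial.C (M'ev y i j) * Polynomial.X)
    (N : Matrix (Fin 3) (Fin 3) K) (hNN : N * N = 1)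
    (hMy0 : Mev ![1,0,0,0] = N) (hM'y0 : M'ev ![1,0,0,0] = N)
    (h : Nonempty ((coker K M) ≃ₗ[R4 K] (coker K M'))) :
    ∃ P Q P' Q' : Matrix (Fin 3) (Fin 3) K,
      P' * P = 1 ∧ Q' * Q = 1 ∧ (∀ y, P * Mev y = M'ev y * Q) ∧
      (∀ y, P' * M'ev y = Mev y * Q') := by
  obtain ⟨e⟩ := h
  obtain ⟨A, B, hAB, hAfull⟩ := lift_map M M' e.toLinearMap
  obtain ⟨A', B', hAB', hA'full⟩ := lift_map M' M e.symm.toLinearMap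
  have hps : Function.Surjective ⇑(proj K) := Ideal.Quotient.mk_surjective
  -- the composite is the identity modulo the image of M
  have hcomp : ∀ j : Fin 3, ∃ d : Fin 3 → R4 K,
      (M.map ⇑(proj K)) *ᵥ d =
        ((A'.map ⇑(proj K)) * (A.map ⇑(proj K))) *ᵥ Pi.single j 1 - Pi.single j 1 := by
    intro j
    have h1 : Submodule.Quotient.mk (p := LinearMap.range (mbar K M))
        (((A'.map ⇑(proj K)) * (A.map ⇑(proj K))) *ᵥ Pi.single j 1) =
        Submodule.Quotient.mk (Pi.single j 1) := by
      rw [← Matrix.mulVec_mulVec, hA'full, hAfull]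
      simp
    have h2 := (Submodule.Quotient.eq _).mp h1
    obtain ⟨d, hd⟩ := h2
    exact ⟨d, hd⟩
  choose d hd using hcomp
  choose Dr hDr using fun i j : Fin 3 => hps (d j i)
  set D : Matrix (Fin 3) (Fin 3) (S K) := Matrix.of Dr with hD
  have hid : ∀ i j, ∃ ee : S K,
      (A' * A) i j = (1 : Matrix (Fin 3) (Fin 3) (S K)) i j + (M * D) i j + f4 K * ee := by
    intro i j
    have hDcol : (D.map ⇑(proj K)) *ᵥ (Pi.single j 1) = d j := by
      rw [Matrix.mulVec_single_one]; funext i'; exact hDr i' j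
    have hent : ((A' * A).map ⇑(proj K)) i j =
        ((1 : Matrix (Fin 3) (Fin 3) (R4 K)) + (M * D).map ⇑(proj K)) i j := by
      rw [Matrix.map_mul, Matrix.map_mul]
      have e1 : ((A'.map ⇑(proj K)) * (A.map ⇑(proj K))) i j
          = (((A'.map ⇑(proj K)) * (A.map ⇑(proj K))) *ᵥ (Pi.single j 1)) i := by
        rw [Matrix.mulVec_single_one]; rfl
      have e2 : ((M.map ⇑(proj K)) * (D.map ⇑(proj K))) i j
          = ((M.map ⇑(proj K)) *ᵥ d j) i := by
        rw [← hDcol, Matrix.mulVec_mulVec, Matrix.mulVec_single_one]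
        rfl
      rw [e1, Matrix.add_apply, e2, hd j]
      simp [Matrix.one_apply, Pi.single_apply, eq_comm]
    have hz : proj K ((A' * A) i j - ((1 : Matrix (Fin 3) (Fin 3) (S K)) i j + (M * D) i j)) = 0 := by
      have hone : proj K ((1 : Matrix (Fin 3) (Fin 3) (S K)) i j)
          = (1 : Matrix (Fin 3) (Fin 3) (R4 K)) i j := by
        simp [Matrix.one_apply, apply_ite (proj K)]
      rw [map_sub, map_add, hone]
      have := hent
      simp only [Matrix.map_apply, Matrix.add_apply] at this
      rw [this]
      ring
    rw [Ideal.Quotient.eq_zero_iff_mem, Ideal.mem_span_singleton] at hz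
    obtain ⟨ee, hee⟩ := hz
    exact ⟨ee, by rw [← hee]; ring⟩
  -- now extract the scalar matrices
  set P : Matrix (Fin 3) (Fin 3) K := Matrix.of fun i j => ev0 (A i j) with hP
  set Q : Matrix (Fin 3) (Fin 3) K := Matrix.of fun i j => ev0 (B i j) with hQdef
  set P' : Matrix (Fin 3) (Fin 3) K := Matrix.of fun i j => ev0 (A' i j) with hP'
  set Q' : Matrix (Fin 3) (Fin 3) K := Matrix.of fun i j => ev0 (B' i j) with hQ'def
  have claim1 : ∀ y, P * Mev y = M'ev y * Q := by
    intro y; ext i j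
    obtain ⟨cc, hcc⟩ := hAB i j
    have h2 := congrArg (fun p => ((phit y) p).coeff 1) hcc
    simp only [Matrix.mul_apply, map_sum, _root_.map_mul, map_add, Polynomial.finset_sum_coeff,
      Polynomial.coeff_add, coeff1_f4_mul, hMev, hM'ev, coeff1_mul_CX, coeff1_CX_mul,
      phit_coeff_zero, add_zero] at h2
    simpa [Matrix.mul_apply, hP, hQdef] using h2
  have claim1' : ∀ y, P' * M'ev y = Mev y * Q' := by
    intro y; ext i j
    obtain ⟨cc, hcc⟩ := hAB' i j
    have h2 := congrArg (fun p => ((phit y) p).coeff 1) hcc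
    simp only [Matrix.mul_apply, map_sum, _root_.map_mul, map_add, Polynomial.finset_sum_coeff,
      Polynomial.coeff_add, coeff1_f4_mul, hMev, hM'ev, coeff1_mul_CX, coeff1_CX_mul,
      phit_coeff_zero, add_zero] at h2
    simpa [Matrix.mul_apply, hP', hQ'def] using h2
  have hMz : ∀ i j, ev0 (M i j) = 0 := by
    intro i j
    have h3 := congrArg (fun p => p.coeff 0) (hMev (fun _ => 0) i j)
    simpa [phit_coeff_zero, Polynomial.mul_coeff_zero] using h3
  have claim2 : P' * P = 1 := by
    ext i j
    obtain ⟨ee, hee⟩ := hid i j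
    have h2 := congrArg (fun p => ((phit (fun _ => 0)) p).coeff 0) hee
    simp only [Matrix.mul_apply, map_sum, _root_.map_mul, map_add, Polynomial.finset_sum_coeff,
      Polynomial.coeff_add, Polynomial.mul_coeff_zero, phit_coeff_zero, hMz, ev0_f4,
      zero_mul, mul_zero, Finset.sum_const_zero, add_zero] at h2
    have hone : ev0 ((1 : Matrix (Fin 3) (Fin 3) (S K)) i j)
        = (1 : Matrix (Fin 3) (Fin 3) K) i j := by
      simp [Matrix.one_apply, apply_ite ev0, ev0]
    rw [hone] at h2
    simpa [Matrix.mul_apply, hP, hP'] using h2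
  have hPN : P * N = N * Q := by
    have h5 := claim1 ![1,0,0,0]; rwa [hMy0, hM'y0] at h5
  have hP'N : P' * N = N * Q' := by
    have h5 := claim1' ![1,0,0,0]; rwa [hMy0, hM'y0] at h5
  have hQ : N * (P * N) = Q := by rw [hPN, ← Matrix.mul_assoc, hNN, Matrix.one_mul]
  have hQ' : N * (P' * N) = Q' := by rw [hP'N, ← Matrix.mul_assoc, hNN, Matrix.one_mul]
  have claim3 : Q' * Q = 1 := by
    calc Q' * Q = (N * (P' * N)) * (N * (P * N)) := by rw [hQ, hQ']
      _ = N * ((P' * ((N * N) * P)) * N) := by noncomm_ring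
      _ = N * ((P' * P) * N) := by rw [hNN, Matrix.one_mul]
      _ = N * N := by rw [claim2, Matrix.one_mul]
      _ = 1 := hNN
  exact ⟨P, Q, P', Q', claim2, claim3, claim1, claim1'⟩

end Key
section Ev
variable {K : Type} [Field K]

def etaEv (a b c ε : K) (y : Fin 4 → K) : Matrix (Fin 3) (Fin 3) K :=
  !![0, y 0 + y 1, y 2 - a * y 3;
     y 0 + ε * y 1, -(y 2) + c * y 3, 0;
     y 2 - b * y 3, 0, -(y 0) - ε ^ 2 * y 1]

def thetaEv (a b c : K) (y : Fin 4 → K) : Matrix (Fin 3) (Fin 3) K :=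
  !![0, y 0 + y 2, y 1 - a * y 3;
     y 0 - a ^ 2 * b * y 2, -(y 1) + c * y 3, 0;
     y 1 - b * y 3, 0, -(y 0) + a * b ^ 2 * y 2]

def NN : Matrix (Fin 3) (Fin 3) K := !![0, 1, 0; 1, 0, 0; 0, 0, -1]

lemma NN_mul_NN : (NN : Matrix (Fin 3) (Fin 3) K) * NN = 1 := by
  ext i j
  fin_cases i <;> fin_cases j <;>
    simp [NN, Matrix.mul_apply, Fin.sum_univ_three, Matrix.one_apply, Matrix.vecHead, Matrix.vecTail]

lemma phit_etaM (a b c ε : K) (y : Fin 4 → K) (i j : Fin 3) :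
    (phit y) (etaM K a b c ε i j) = Polynomial.C (etaEv a b c ε y i j) * Polynomial.X := by
  fin_cases i <;> fin_cases j <;>
    · simp [etaM, etaEv, Yv1, Yv2, Yv3, Yv4, phit, Polynomial.C_add, Polynomial.C_sub,
        Polynomial.C_neg, Polynomial.C_mul, Matrix.vecHead, Matrix.vecTail]
      try ring

lemma phit_thetaM (a b c : K) (y : Fin 4 → K) (i j : Fin 3) :
    (phit y) (thetaM K a b c i j) = Polynomial.C (thetaEv a b c y i j) * Polynomial.X := by
  fin_cases i <;> fin_cases j <;>
    · simp [thetaM, thetaEv, Yv1, Yv2, Yv3, Yv4, phit, Polynomial.C_add, Polynomial.C_sub,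
        Polynomial.C_neg, Polynomial.C_mul, Matrix.vecHead, Matrix.vecTail]
      try ring

lemma etaEv_y0 (a b c ε : K) : etaEv a b c ε ![1,0,0,0] = NN := by
  ext i j
  fin_cases i <;> fin_cases j <;> simp [etaEv, NN]

lemma thetaEv_y0 (a b c : K) : thetaEv a b c ![1,0,0,0] = NN := by
  ext i j
  fin_cases i <;> fin_cases j <;> simp [thetaEv, NN]

end Ev
section Alg
variable {K : Type} [Field K]

lemma cube_ne_neg {x x' : K} (hx : x ^ 3 = -1) (hx' : x' ^ 3 = -1)
    (hchar : (2 : K) ≠ 0) : x ≠ -x' := by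
  intro h
  rw [h] at hx
  have h1 : x' ^ 3 = 1 := by linear_combination -hx
  have h2 : (2 : K) * x' ^ 3 = 0 := by linear_combination h1 + hx'
  have hx'0 : x' ≠ 0 := by
    intro h0; rw [h0] at hx'; norm_num at hx'
  rcases mul_eq_zero.mp h2 with h | h
  · exact hchar h
  · exact pow_ne_zero 3 hx'0 h

lemma eta_eta {a b c a' b' c' ε ε' : K}
    (habc : cubePerm K a b c) (habc' : cubePerm K a' b' c')
    (he : ε ^ 3 = 1) (hne : ε ≠ 1) (he' : ε' ^ 3 = 1) (hne' : ε' ≠ 1)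
    {P Q P' Q' : Matrix (Fin 3) (Fin 3) K}
    (hPP : P' * P = 1) (hQQ : Q' * Q = 1)
    (h1 : ∀ y, P * etaEv a b c ε y = etaEv a' b' c' ε' y * Q)
    (h2 : ∀ y, P' * etaEv a' b' c' ε' y = etaEv a b c ε y * Q') :
    a = a' ∧ b = b' ∧ c = c' ∧ ε = ε' := by
  obtain ⟨ha3, hb3, hc3, hab, hac, hbc⟩ := habc
  obtain ⟨ha3', hb3', hc3', hab', hac', hbc'⟩ := habc'
  have hq : ε ^ 2 + ε + 1 = 0 := by
    have h0 : (ε - 1) * (ε ^ 2 + ε + 1) = 0 := by linear_combination he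
    rcases mul_eq_zero.mp h0 with h0 | h0
    · exact absurd (by linear_combination h0) hne
    · exact h0
  have hq' : ε' ^ 2 + ε' + 1 = 0 := by
    have h0 : (ε' - 1) * (ε' ^ 2 + ε' + 1) = 0 := by linear_combination he'
    rcases mul_eq_zero.mp h0 with h0 | h0
    · exact absurd (by linear_combination h0) hne'
    · exact h0
  have hne2' : ε' ^ 2 ≠ 1 := by
    intro h0
    have h4 : ε' * ε' ^ 2 = ε' ^ 3 := by ring
    rw [h0, he'] at h4
    exact hne' (by linear_combination h4)
  have hee2' : ε' ≠ ε' ^ 2 := by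
    intro h0
    have h4 : ε' * ε' ^ 2 = ε' ^ 3 := by ring
    rw [← h0, he'] at h4
    exact hne2' (by linear_combination h4)
  have hE := fun y (i j : Fin 3) => congrFun (congrFun (h1 y) i) j
  have hE' := fun y (i j : Fin 3) => congrFun (congrFun (h2 y) i) j
  -- Step 1: a = a' via row 0
  have hp01 : P' 0 1 = 0 := by
    have h := hE' ![(-1:K),1,0,0] 0 0
    simp [Matrix.mul_apply, Fin.sum_univ_three, etaEv, Matrix.vecHead, Matrix.vecTail] at h
    rcases h with h | h <;>
      first
        | exact h
        | exact absurd (by linear_combination h) hne'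
        | exact absurd (by linear_combination -h) hne'
  have hp02 : P' 0 2 = 0 := by
    have h := hE' ![(-1:K),1,0,0] 0 2
    simp [Matrix.mul_apply, Fin.sum_univ_three, etaEv, Matrix.vecHead, Matrix.vecTail] at h
    rcases h with h | h <;>
      first
        | exact h
        | exact absurd (by linear_combination h) hne2'
        | exact absurd (by linear_combination -h) hne2'
  have hp00 : P' 0 0 ≠ 0 := by
    have h := congrFun (congrFun hPP 0) 0
    simp [Matrix.mul_apply, Fin.sum_univ_three, Matrix.one_apply, hp01, hp02] at h
    intro h0
    rw [h0] at h
    simp at h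
  have haa : a = a' := by
    have h := hE' ![(0:K),0,a,1] 0 2
    simp [Matrix.mul_apply, Fin.sum_univ_three, etaEv, Matrix.vecHead, Matrix.vecTail,
      hp01, hp02] at h
    rcases h with h | h <;>
      first
        | exact absurd h hp00
        | exact (by linear_combination h)
        | exact (by linear_combination -h)
  -- Step 2: c = c' via column 1
  have hq01 : Q 0 1 = 0 := by
    have h := hE ![(-1:K),1,0,0] 1 1
    simp [Matrix.mul_apply, Fin.sum_univ_three, etaEv, Matrix.vecHead, Matrix.vecTail] at h
    rcases h with h | h <;>
      first
        | exact h
        | exact absurd (by linear_combination h) hne'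
        | exact absurd (by linear_combination -h) hne'
  have hq21 : Q 2 1 = 0 := by
    have h := hE ![(-1:K),1,0,0] 2 1
    simp [Matrix.mul_apply, Fin.sum_univ_three, etaEv, Matrix.vecHead, Matrix.vecTail] at h
    rcases h with h | h <;>
      first
        | exact h
        | exact absurd (by linear_combination h) hne2'
        | exact absurd (by linear_combination -h) hne2'
  have hq11 : Q 1 1 ≠ 0 := by
    have h := congrFun (congrFun hQQ 1) 1
    simp [Matrix.mul_apply, Fin.sum_univ_three, Matrix.one_apply, hq01, hq21] at h
    intro h0
    rw [h0] at h
    simp at h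
  have hcc : c = c' := by
    have h := hE ![(0:K),0,c,1] 1 1
    simp [Matrix.mul_apply, Fin.sum_univ_three, etaEv, Matrix.vecHead, Matrix.vecTail,
      hq01, hq21] at h
    rcases h with h | h <;>
      first
        | exact absurd h hq11
        | exact (by linear_combination h)
        | exact (by linear_combination -h)
  -- Step 3: ε = ε' and b = b' via column 0
  have hq10 : Q 1 0 = 0 := by
    have h := hE ![-ε,1,0,0] 0 0
    simp [Matrix.mul_apply, Fin.sum_univ_three, etaEv, Matrix.vecHead, Matrix.vecTail] at h
    rcases h with h | h <;>
      first
        | exact h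
        | exact absurd (by linear_combination h) hne
        | exact absurd (by linear_combination -h) hne
  by_cases heps : ε = ε'
  · have hq20 : Q 2 0 = 0 := by
      have h := hE ![-ε,1,0,0] 2 0
      simp [Matrix.mul_apply, Fin.sum_univ_three, etaEv, Matrix.vecHead, Matrix.vecTail] at h
      rcases h with h | h <;>
        first
          | exact h
          | exact absurd (by linear_combination h - heps) hee2'
          | exact absurd (by linear_combination heps - h) hee2'
          | exact absurd (by linear_combination h + heps) hee2'
          | exact absurd (by linear_combination - h - heps) hee2'
    have hq00 : Q 0 0 ≠ 0 := by
      have h := congrFun (congrFun hQQ 0) 0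
      simp [Matrix.mul_apply, Fin.sum_univ_three, Matrix.one_apply, hq10, hq20] at h
      intro h0
      rw [h0] at h
      simp at h
    have hbb : b = b' := by
      have h := hE ![(0:K),0,b,1] 2 0
      simp [Matrix.mul_apply, Fin.sum_univ_three, etaEv, Matrix.vecHead, Matrix.vecTail,
        hq10, hq20] at h
      rcases h with h | h <;>
        first
          | exact absurd h hq00
          | exact (by linear_combination h)
          | exact (by linear_combination -h)
    exact ⟨haa, hbb, hcc, heps⟩
  · exfalso
    have hq00 : Q 0 0 = 0 := by
      have h := hE ![-ε,1,0,0] 1 0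
      simp [Matrix.mul_apply, Fin.sum_univ_three, etaEv, Matrix.vecHead, Matrix.vecTail] at h
      rcases h with h | h <;>
        first
          | exact h
          | exact absurd (by linear_combination h) heps
          | exact absurd (by linear_combination -h) heps
    have hq20 : Q 2 0 ≠ 0 := by
      have h := congrFun (congrFun hQQ 0) 0
      simp [Matrix.mul_apply, Fin.sum_univ_three, Matrix.one_apply, hq10, hq00] at h
      intro h0
      rw [h0] at h
      simp at h
    have hba : b = a' := by
      have h := hE ![(0:K),0,b,1] 0 0
      simp [Matrix.mul_apply, Fin.sum_univ_three, etaEv, Matrix.vecHead, Matrix.vecTail,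
        hq10, hq00] at h
      rcases h with h | h <;>
        first
          | exact absurd h hq20
          | exact (by linear_combination h)
          | exact (by linear_combination -h)
    rw [haa] at hab
    exact hab hba.symm

end Alg
section Alg2
variable {K : Type} [Field K]

lemma theta_theta {a b c a' b' c' : K}
    (habc : cubePerm K a b c) (habc' : cubePerm K a' b' c')
    {P Q P' Q' : Matrix (Fin 3) (Fin 3) K}
    (hPP : P' * P = 1) (hQQ : Q' * Q = 1)
    (h1 : ∀ y, P * thetaEv a b c y = thetaEv a' b' c' y * Q)
    (h2 : ∀ y, P' * thetaEv a' b' c' y = thetaEv a b c y * Q') :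
    a = a' ∧ b = b' ∧ c = c' := by
  obtain ⟨ha3, hb3, hc3, hab, hac, hbc⟩ := habc
  obtain ⟨ha3', hb3', hc3', hab', hac', hbc'⟩ := habc'
  have ha2b1' : a' ^ 2 * b' ≠ -1 := by
    intro h0
    exact hab' (by linear_combination a' * h0 - b' * ha3')
  have hab21' : a' * b' ^ 2 ≠ -1 := by
    intro h0
    exact hab' (by linear_combination -b' * h0 + a' * hb3')
  have ha2b1 : a ^ 2 * b ≠ -1 := by
    intro h0
    exact hab (by linear_combination a * h0 - b * ha3)
  have hE := fun y (i j : Fin 3) => congrFun (congrFun (h1 y) i) j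
  have hE' := fun y (i j : Fin 3) => congrFun (congrFun (h2 y) i) j
  -- Step 1: a = a' via row 0 (vanishes at ![-1,0,1,0] and ![0,a,0,1])
  have hp01 : P' 0 1 = 0 := by
    have h := hE' ![(-1:K),0,1,0] 0 0
    simp [Matrix.mul_apply, Fin.sum_univ_three, thetaEv, Matrix.vecHead, Matrix.vecTail] at h
    rcases h with h | h <;>
      first
        | exact h
        | exact absurd (by linear_combination h) ha2b1'
        | exact absurd (by linear_combination -h) ha2b1'
  have hp02 : P' 0 2 = 0 := by
    have h := hE' ![(-1:K),0,1,0] 0 2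
    simp [Matrix.mul_apply, Fin.sum_univ_three, thetaEv, Matrix.vecHead, Matrix.vecTail] at h
    rcases h with h | h <;>
      first
        | exact h
        | exact absurd (by linear_combination h) hab21'
        | exact absurd (by linear_combination -h) hab21'
  have hp00 : P' 0 0 ≠ 0 := by
    have h := congrFun (congrFun hPP 0) 0
    simp [Matrix.mul_apply, Fin.sum_univ_three, Matrix.one_apply, hp01, hp02] at h
    intro h0
    rw [h0] at h
    simp at h
  have haa : a = a' := by
    have h := hE' ![(0:K),a,0,1] 0 2
    simp [Matrix.mul_apply, Fin.sum_univ_three, thetaEv, Matrix.vecHead, Matrix.vecTail,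
      hp01, hp02] at h
    rcases h with h | h <;>
      first
        | exact absurd h hp00
        | exact (by linear_combination h)
        | exact (by linear_combination -h)
  -- Step 2: c = c' via column 1 (vanishes at ![-1,0,1,0] and ![0,c,0,1])
  have hq01 : Q 0 1 = 0 := by
    have h := hE ![(-1:K),0,1,0] 1 1
    simp [Matrix.mul_apply, Fin.sum_univ_three, thetaEv, Matrix.vecHead, Matrix.vecTail] at h
    rcases h with h | h <;>
      first
        | exact h
        | exact absurd (by linear_combination h) ha2b1'
        | exact absurd (by linear_combination -h) ha2b1'
  have hq21 : Q 2 1 = 0 := by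
    have h := hE ![(-1:K),0,1,0] 2 1
    simp [Matrix.mul_apply, Fin.sum_univ_three, thetaEv, Matrix.vecHead, Matrix.vecTail] at h
    rcases h with h | h <;>
      first
        | exact h
        | exact absurd (by linear_combination h) hab21'
        | exact absurd (by linear_combination -h) hab21'
  have hq11 : Q 1 1 ≠ 0 := by
    have h := congrFun (congrFun hQQ 1) 1
    simp [Matrix.mul_apply, Fin.sum_univ_three, Matrix.one_apply, hq01, hq21] at h
    intro h0
    rw [h0] at h
    simp at h
  have hcc : c = c' := by
    have h := hE ![(0:K),c,0,1] 1 1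
    simp [Matrix.mul_apply, Fin.sum_univ_three, thetaEv, Matrix.vecHead, Matrix.vecTail,
      hq01, hq21] at h
    rcases h with h | h <;>
      first
        | exact absurd h hq11
        | exact (by linear_combination h)
        | exact (by linear_combination -h)
  -- Step 3: b = b' via column 0 (vanishes at ![a^2*b,0,1,0] and ![0,b,0,1])
  have hq10 : Q 1 0 = 0 := by
    have h := hE ![a^2*b,0,1,0] 0 0
    simp [Matrix.mul_apply, Fin.sum_univ_three, thetaEv, Matrix.vecHead, Matrix.vecTail] at h
    rcases h with h | h <;>
      first
        | exact h
        | exact absurd (by linear_combination h) ha2b1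
        | exact absurd (by linear_combination -h) ha2b1
  by_cases hQ00 : Q 0 0 = 0
  · exfalso
    have hq20 : Q 2 0 ≠ 0 := by
      have h := congrFun (congrFun hQQ 0) 0
      simp [Matrix.mul_apply, Fin.sum_univ_three, Matrix.one_apply, hq10, hQ00] at h
      intro h0
      rw [h0] at h
      simp at h
    have hba : b = a' := by
      have h := hE ![(0:K),b,0,1] 0 0
      simp [Matrix.mul_apply, Fin.sum_univ_three, thetaEv, Matrix.vecHead, Matrix.vecTail,
        hq10, hQ00] at h
      rcases h with h | h <;>
        first
          | exact absurd h hq20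
          | exact (by linear_combination h)
          | exact (by linear_combination -h)
    rw [haa] at hab
    exact hab hba.symm
  · have hbb : b = b' := by
      have h := hE ![(0:K),b,0,1] 2 0
      simp [Matrix.mul_apply, Fin.sum_univ_three, thetaEv, Matrix.vecHead, Matrix.vecTail,
        hq10] at h
      rcases h with h | h <;>
        first
          | exact absurd h hQ00
          | exact (by linear_combination h)
          | exact (by linear_combination -h)
    exact ⟨haa, hbb, hcc⟩

lemma eta_theta {a b c a' b' c' ε : K}
    (habc : cubePerm K a b c) (habc' : cubePerm K a' b' c')
    (he : ε ^ 3 = 1) (hne : ε ≠ 1)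
    {P Q Q' : Matrix (Fin 3) (Fin 3) K}
    (hQQ : Q' * Q = 1)
    (h1 : ∀ y, P * etaEv a b c ε y = thetaEv a' b' c' y * Q) : False := by
  obtain ⟨ha3, hb3, hc3, hab, hac, hbc⟩ := habc
  obtain ⟨ha3', hb3', hc3', hab', hac', hbc'⟩ := habc'
  have hE := fun y (i j : Fin 3) => congrFun (congrFun (h1 y) i) j
  -- column 1 of etaEv vanishes at ![-1,1,0,0] and ![0,0,c,1]
  have hA0 : Q 2 1 - Q 1 1 = 0 := by
    have h := hE ![(-1:K),1,0,0] 0 1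
    simp [Matrix.mul_apply, Fin.sum_univ_three, etaEv, thetaEv,
      Matrix.vecHead, Matrix.vecTail] at h
    first
      | linear_combination h
      | linear_combination -h
  have hA1 : Q 0 1 + Q 1 1 = 0 := by
    have h := hE ![(-1:K),1,0,0] 1 1
    simp [Matrix.mul_apply, Fin.sum_univ_three, etaEv, thetaEv,
      Matrix.vecHead, Matrix.vecTail] at h
    first
      | linear_combination h
      | linear_combination -h
  have hB0 : c * Q 1 1 - a' * Q 2 1 = 0 := by
    have h := hE ![(0:K),0,c,1] 0 1
    simp [Matrix.mul_apply, Fin.sum_univ_three, etaEv, thetaEv,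
      Matrix.vecHead, Matrix.vecTail] at h
    first
      | linear_combination h
      | linear_combination -h
  have hB1 : -(a' ^ 2 * b' * c) * Q 0 1 + c' * Q 1 1 = 0 := by
    have h := hE ![(0:K),0,c,1] 1 1
    simp [Matrix.mul_apply, Fin.sum_univ_three, etaEv, thetaEv,
      Matrix.vecHead, Matrix.vecTail] at h
    first
      | linear_combination h
      | linear_combination -h
  by_cases ht : Q 1 1 = 0
  · have hz0 : Q 0 1 = 0 := by linear_combination hA1 - ht
    have hz2 : Q 2 1 = 0 := by linear_combination hA0 + ht
    have h := congrFun (congrFun hQQ 1) 1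
    simp [Matrix.mul_apply, Fin.sum_univ_three, Matrix.one_apply, hz0, hz2, ht] at h
  · have hca' : c = a' := by
      have key : (c - a') * Q 1 1 = 0 := by linear_combination hB0 + a' * hA0
      rcases mul_eq_zero.mp key with h | h
      · linear_combination h
      · exact absurd h ht
    have hbc'' : b' = c' := by
      have key : (a' ^ 2 * b' * c + c') * Q 1 1 = 0 := by
        linear_combination hB1 + a' ^ 2 * b' * c * hA1
      rcases mul_eq_zero.mp key with h | h
      · linear_combination -h + a' ^ 2 * b' * hca' + b' * ha3'
      · exact absurd h ht
    exact hbc' hbc''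

end Alg2

theorem stmt16 (K : Type) [Field K] [IsAlgClosed K] [CharZero K]
    (a b c a' b' c' ε ε' : K)
    (habc : cubePerm K a b c) (habc' : cubePerm K a' b' c')
    (he : ε ^ 3 = 1) (hne : ε ≠ 1) (he' : ε' ^ 3 = 1) (hne' : ε' ≠ 1) :
    (Nonempty (coker K (etaM K a b c ε) ≃ₗ[R4 K] coker K (etaM K a' b' c' ε')) →
      a = a' ∧ b = b' ∧ c = c' ∧ ε = ε') ∧
    (Nonempty (coker K (thetaM K a b c) ≃ₗ[R4 K] coker K (thetaM K a' b' c')) →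
      a = a' ∧ b = b' ∧ c = c') ∧
    ¬ Nonempty (coker K (etaM K a b c ε) ≃ₗ[R4 K] coker K (thetaM K a' b' c')) := by
  refine ⟨?_, ?_, ?_⟩
  · intro hiso
    obtain ⟨P, Q, P', Q', hPP, hQQ, hrel, hrel'⟩ :=
      key (phit_etaM a b c ε) (phit_etaM a' b' c' ε') NN NN_mul_NN
        (etaEv_y0 a b c ε) (etaEv_y0 a' b' c' ε') hiso
    exact eta_eta habc habc' he hne he' hne' hPP hQQ hrel hrel'
  · intro hiso
    obtain ⟨P, Q, P', Q', hPP, hQQ, hrel, hrel'⟩ :=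
      key (phit_thetaM a b c) (phit_thetaM a' b' c') NN NN_mul_NN
        (thetaEv_y0 a b c) (thetaEv_y0 a' b' c') hiso
    exact theta_theta habc habc' hPP hQQ hrel hrel'
  · intro hiso
    obtain ⟨P, Q, P', Q', hPP, hQQ, hrel, hrel'⟩ :=
      key (phit_etaM a b c ε) (phit_thetaM a' b' c') NN NN_mul_NN
        (etaEv_y0 a b c ε) (thetaEv_y0 a' b' c') hiso
    exact eta_theta habc habc' he hne hQQ hrel
end
end
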